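/- arXiv:1101.4388 — 12 statements merged into one kernel-verified Lean document; each statement's English description precedes it below -/
import Mathlib

section
/- Let X be a set and K : X × X → ℂ a bounded function such that for all finitely many pairwise distinct points x₁, …, xₙ ∈ X the functions K(x₁,·), …, K(xₙ,·) are linearly independent. Then the following are equivalent: (i) K satisfies condition (A3); (ii) for every sequence (c⁽ⁿ⁾)_{n∈ℕ} of finitely supported functions X → ℂ which is Cauchy with respect to the ℓ¹ norm ‖c‖₁ := ∑_{t∈X} |c_t| and which satisfies lim_{n→∞} ∑_{t∈X} c⁽ⁿ⁾_t K(t, x) = 0 for every x ∈ X, one has lim_{n→∞} ‖c⁽ⁿ⁾‖₁ = 0. -/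
/-!
Finitely supported coefficient families sit inside `ℓ¹(X, ℂ)`, which is complete, so an
`ℓ¹`-Cauchy sequence `c n` converges there to some `g`. Since `K` is bounded, each functional
`f ↦ ∑' t, f t * K t x` is continuous on `ℓ¹`, hence `∑' t, g t * K t x = 0` for all `x`.
If the support of `g` were infinite, enumerating it would give an injective sequence
contradicting (A3); if it is finite, linear independence of the `K t` gives `g = 0`.
So `‖c n‖₁ → ‖g‖₁ = 0`.

Conversely, if `∑ j, c j K(x j, ·) = 0` with `x` injective and `c` summable, the partial sums
`∑ i < n, c i δ_{x i}` are `ℓ¹`-Cauchy and tend to `0` pointwise against `K`, so their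
`ℓ¹` norms tend to `0`; but for `n > j` that norm dominates `‖c j‖`.
-/

open Filter Topology

/-- Condition (A3): for every injective sequence of points and every absolutely
summable coefficient sequence, vanishing of the series `∑ c_j K(x_j, ·)` forces
all coefficients to vanish. -/
def CondA3 {X : Type*} (K : X → X → ℂ) : Prop :=
  ∀ x : ℕ → X, Function.Injective x → ∀ c : ℕ → ℂ,
    Summable (fun j => ‖c j‖) →
    (∀ t : X, ∑' j, c j * K (x j) t = 0) → ∀ j, c j = 0

open Finset ENNReal lp

namespace Finsupp

theorem tsum_eq_sum {ι M α : Type*} [Zero M] [AddCommMonoid α] [TopologicalSpace α]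
    (c : ι →₀ M) {f : ι → M → α} (hf : ∀ i, f i 0 = 0) : ∑' i, f i (c i) = c.sum f :=
  _root_.tsum_eq_sum fun i hi => by rw [notMem_support_iff.1 hi, hf]

variable {ι E : Type*} [NormedAddCommGroup E]

def toLp (p : ℝ≥0∞) : (ι →₀ E) →+ lp (fun _ : ι => E) p where
  toFun c := ⟨⇑c, (memℓp_zero_iff.2 c.hasFiniteSupport).of_exponent_ge zero_le⟩
  map_zero' := rfl
  map_add' _ _ := rfl

@[simp]
theorem coe_toLp (p : ℝ≥0∞) (c : ι →₀ E) : ⇑(toLp p c) = c := rfl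

theorem norm_toLp_one (c : ι →₀ E) : ‖toLp 1 c‖ = ∑ t ∈ c.support, ‖c t‖ := by
  rw [lp.norm_eq_tsum_rpow (by simp)]
  simp only [toReal_one, Real.rpow_one, div_one, coe_toLp]
  exact c.tsum_eq_sum fun _ => norm_zero

theorem norm_toLp_one_single (i : ι) (a : E) : ‖toLp 1 (single i a)‖ = ‖a‖ := by
  rw [norm_toLp_one]
  exact sum_single_index norm_zero

theorem cauchySeq_toLp_one_iff {c : ℕ → ι →₀ E} :
    CauchySeq (fun n => toLp 1 (c n)) ↔
      ∀ ε > 0, ∃ N, ∀ m ≥ N, ∀ n ≥ N, ∑ t ∈ (c m - c n).support, ‖(c m - c n) t‖ < ε := by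
  simp only [Metric.cauchySeq_iff, dist_eq_norm, ← map_sub, norm_toLp_one]

end Finsupp

theorem continuous_tsum_mul_of_norm_le {ι 𝕜 : Type*} [RCLike 𝕜] {k : ι → 𝕜} {M : ℝ}
    (hk : ∀ i, ‖k i‖ ≤ M) : Continuous fun f : ℓ¹(ι, 𝕜) => ∑' i, f i * k i :=
  let k' : ℓ^∞(ι, 𝕜) := ⟨k, memℓp_infty ⟨M, Set.forall_mem_range.2 hk⟩⟩
  ((lp.dualPairing 1 ∞ (fun _ => ContinuousLinearMap.mul 𝕜 𝕜) (K := 1)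
    fun _ => by simp).flip k').continuous

theorem linearIndependent_of_forall_fin_comp {ι R M : Type*} [Semiring R] [AddCommMonoid M]
    [Module R M] {v : ι → M}
    (h : ∀ (n : ℕ) (x : Fin n → ι), Function.Injective x → LinearIndependent R (v ∘ x)) :
    LinearIndependent R v :=
  linearIndependent_iff_finset_linearIndependent.2 fun s =>
    (linearIndependent_equiv s.equivFin.symm).1 <|
      h s.card _ (Subtype.val_injective.comp s.equivFin.symm.injective)

section

variable {X : Type*} {K : X → X → ℂ} {M : ℝ}

theorem CondA3.finite_support_of_tsum_mul_eq_zero (hA3 : CondA3 K) {g : X → ℂ}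
    (hg : Summable fun t => ‖g t‖) (h : ∀ x, ∑' t, g t * K t x = 0) :
    (Function.support g).Finite := by
  by_contra hinf
  have : Countable (Function.support g) := (Summable.of_norm hg).countable_support.to_subtype
  have : Infinite (Function.support g) := Set.infinite_coe_iff.2 hinf
  obtain ⟨e⟩ : Nonempty (ℕ ≃ Function.support g) := inferInstance
  have he : Function.Injective fun j => (e j : X) := Subtype.val_injective.comp e.injective
  refine (e 0).2 (hA3 _ he (fun j => g (e j)) (hg.comp_injective he) (fun y => ?_) 0)
  rw [← h y, ← tsum_subtype_eq_of_support_subset (s := Function.support g)]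
  · exact e.tsum_eq fun t : Function.support g => g t * K t y
  · exact Function.support_mul_subset_left _ _

theorem LinearIndependent.eq_zero_of_tsum_mul_eq_zero (hK : LinearIndependent ℂ K)
    {g : X → ℂ} (hfin : (Function.support g).Finite) (h : ∀ x, ∑' t, g t * K t x = 0) :
    g = 0 := by
  let l := Finsupp.ofSupportFinite g hfin
  suffices l = 0 from funext fun t => DFunLike.congr_fun this t
  refine linearIndependent_iff.1 hK l (funext fun x => ?_)
  rw [Pi.zero_apply, ← h x, ← Finsupp.ofSupportFinite_coe (hf := hfin),
    Finsupp.tsum_eq_sum l (f := fun t a => a * K t x) fun _ => zero_mul _]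
  simp only [Finsupp.linearCombination_apply, Finsupp.sum, Finset.sum_apply, Pi.smul_apply,
    smul_eq_mul]

theorem CondA3.eq_zero_of_tsum_mul_eq_zero (hA3 : CondA3 K) (hK : LinearIndependent ℂ K)
    {g : X → ℂ} (hg : Summable fun t => ‖g t‖) (h : ∀ x, ∑' t, g t * K t x = 0) : g = 0 :=
  hK.eq_zero_of_tsum_mul_eq_zero (hA3.finite_support_of_tsum_mul_eq_zero hg h) h

/-- The Norm Consistency Property of the span of the `K t`, with the `ℓ¹` norm of coefficients
taken in `ℓ¹(X, ℂ)`. -/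
def NormConsistent (K : X → X → ℂ) : Prop :=
  ∀ c : ℕ → X →₀ ℂ, CauchySeq (fun n => Finsupp.toLp 1 (c n)) →
    (∀ x, Tendsto (fun n => ∑ t ∈ (c n).support, c n t * K t x) atTop (𝓝 0)) →
    Tendsto (fun n => Finsupp.toLp 1 (c n)) atTop (𝓝 0)

theorem normConsistent_iff : NormConsistent K ↔
    ∀ c : ℕ → (X →₀ ℂ),
      (∀ ε > 0, ∃ N, ∀ m ≥ N, ∀ n ≥ N, ∑ t ∈ (c m - c n).support, ‖(c m - c n) t‖ < ε) →
      (∀ x : X, Tendsto (fun n => ∑ t ∈ (c n).support, (c n) t * K t x) atTop (𝓝 0)) →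
      Tendsto (fun n => ∑ t ∈ (c n).support, ‖(c n) t‖) atTop (𝓝 0) := by
  refine forall_congr' fun c => ?_
  rw [Finsupp.cauchySeq_toLp_one_iff, tendsto_zero_iff_norm_tendsto_zero]
  simp only [Finsupp.norm_toLp_one]

theorem CondA3.normConsistent (hK : ∀ s t, ‖K s t‖ ≤ M) (hA3 : CondA3 K)
    (hli : LinearIndependent ℂ K) : NormConsistent K := by
  intro c hc hPt
  obtain ⟨g, hg⟩ := cauchySeq_tendsto_of_complete hc
  suffices g = 0 from this ▸ hg
  refine lp.ext ((hA3.eq_zero_of_tsum_mul_eq_zero hli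
    (by simpa using (lp.memℓp g).summable (by simp)) fun x => ?_).trans (lp.coeFn_zero _ _).symm)
  refine tendsto_nhds_unique
    (((continuous_tsum_mul_of_norm_le fun t => hK t x).tendsto g).comp hg)
    ((hPt x).congr fun n => ?_)
  exact (Finsupp.tsum_eq_sum (c n) (f := fun t a => a * K t x) fun _ => zero_mul _).symm

theorem CondA3.of_normConsistent (hK : ∀ s t, ‖K s t‖ ≤ M) (hNC : NormConsistent K) :
    CondA3 K := by
  intro x hx c hc hsum j
  set C : ℕ → X →₀ ℂ := fun n => ∑ i ∈ range n, Finsupp.single (x i) (c i)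
  have hCauchy : CauchySeq fun n => Finsupp.toLp 1 (C n) := by
    simp only [C, map_sum]
    exact cauchySeq_range_of_norm_bounded hc.hasSum.tendsto_sum_nat.cauchySeq
      fun i => (Finsupp.norm_toLp_one_single _ _).le
  have hPt : ∀ y, Tendsto (fun n => ∑ t ∈ (C n).support, C n t * K t y) atTop (𝓝 0) := by
    intro y
    have hsumm : Summable fun i => c i * K (x i) y :=
      (hc.mul_right M).of_norm_bounded fun i => by
        rw [norm_mul]; exact mul_le_mul_of_nonneg_left (hK _ _) (norm_nonneg _)
    convert hsumm.hasSum.tendsto_sum_nat using 2 with n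
    · show (C n).sum (fun t a => a * K t y) = _
      rw [← Finsupp.sum_finsetSum_index (fun _ => zero_mul _) fun _ _ _ => add_mul _ _ _]
      exact Finset.sum_congr rfl fun i _ => Finsupp.sum_single_index (zero_mul _)
    · exact (hsum y).symm
  have hcoord : ∀ n > j, ‖c j‖ ≤ ‖Finsupp.toLp 1 (C n)‖ := fun n hn => by
    have : C n (x j) = c j := by
      rw [Finsupp.finsetSum_apply, Finset.sum_eq_single_of_mem j (mem_range.2 hn)
        fun i _ hij => Finsupp.single_eq_of_ne (hx.ne hij.symm), Finsupp.single_eq_same]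
    simpa [this] using lp.norm_apply_le_norm one_ne_zero (Finsupp.toLp 1 (C n)) (x j)
  have := ge_of_tendsto (hNC C hCauchy hPt).norm ((eventually_gt_atTop j).mono hcoord)
  exact norm_le_zero_iff.1 (by simpa using this)

end

theorem stmt_0 {X : Type*} (K : X → X → ℂ)
    (M : ℝ) (hK : ∀ s t, ‖K s t‖ ≤ M)
    (hli : ∀ (n : ℕ) (x : Fin n → X), Function.Injective x →
      LinearIndependent ℂ (fun j : Fin n => fun t : X => K (x j) t)) :
    CondA3 K ↔
      ∀ c : ℕ → (X →₀ ℂ),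
        (∀ ε > 0, ∃ N, ∀ m ≥ N, ∀ n ≥ N,
          ∑ t ∈ (c m - c n).support, ‖(c m - c n) t‖ < ε) →
        (∀ x : X,
          Tendsto (fun n => ∑ t ∈ (c n).support, (c n) t * K t x) atTop (nhds 0)) →
        Tendsto (fun n => ∑ t ∈ (c n).support, ‖(c n) t‖) atTop (nhds 0) := by
  rw [← normConsistent_iff]
  exact ⟨fun hA3 => hA3.normConsistent hK (linearIndependent_of_forall_fin_comp hli),
    CondA3.of_normConsistent hK⟩
end

section
/- Let d ≥ 1 and let φ ∈ L¹(ℝ^d; ℂ) satisfy φ(ξ) ≠ 0 for Lebesgue-almost every ξ ∈ ℝ^d. Define K(s,t) := ∫_{ℝ^d} e^{−i(s−t)·ξ} φ(ξ) dξ for s, t ∈ ℝ^d. Then K satisfies condition (A3): for every injective sequence (x_j)_{j∈ℕ} in ℝ^d and every complex sequence (c_j) with ∑_j |c_j| < ∞, if ∑_{j=1}^∞ c_j K(x_j, t) = 0 for all t ∈ ℝ^d, then c_j = 0 for all j. -/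
/-!
Put `f ξ = ∑ₖ cₖ e^{-i⟪xₖ, ξ⟫}`, a bounded continuous function. Exchanging sum and integral, the
hypothesis says that the Fourier transform of the integrable function `f φ` vanishes, so `f φ = 0`
almost everywhere by Fourier uniqueness, and hence `f = 0` almost everywhere since `φ ≠ 0` almost
everywhere. Pairing `f` with the Gaussian window `e^{-‖ξ‖²/(4s) + i⟪xⱼ, ξ⟫}` then gives
`∑ₖ cₖ e^{-s‖xₖ - xⱼ‖²} = 0` for every `s > 0`; as `s → ∞` every term with `k ≠ j` dies
(the `xₖ` are distinct), and dominated convergence leaves `cⱼ = 0`.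
-/

open MeasureTheory Complex Filter Topology GaussianFourier Real
open scoped RealInnerProductSpace FourierTransform SchwartzMap

lemma tendsto_tsum_mul_exp_neg_mul_norm_sub_sq {ι V : Type*} [NormedAddCommGroup V]
    {c : ι → ℂ} {x : ι → V} (hx : Function.Injective x) (hc : Summable (‖c ·‖)) (j : ι) :
    Tendsto (fun s : ℝ => ∑' k, c k * rexp (-s * ‖x k - x j‖ ^ 2)) atTop (𝓝 (c j)) := by
  classical
  rw [← tsum_ite_eq j c]
  refine tendsto_tsum_of_dominated_convergence hc (fun k => ?_) ?_
  · by_cases hk : k = j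
    · subst hk; simp
    · have hpos : 0 < ‖x k - x j‖ ^ 2 := by
        have := sub_ne_zero.mpr (hx.ne hk); positivity
      have := Real.tendsto_exp_neg_atTop_nhds_zero.comp (tendsto_id.atTop_mul_const hpos)
      simpa [hk, neg_mul] using (ofRealCLM.continuous.tendsto 0 |>.comp this).const_mul (c k)
  · filter_upwards [eventually_ge_atTop 0] with s hs k
    rw [norm_mul, norm_real, Real.norm_of_nonneg (Real.exp_pos _).le]
    exact mul_le_of_le_one_right (norm_nonneg _)
      (Real.exp_le_one_iff.mpr (by nlinarith [sq_nonneg ‖x k - x j‖]))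

lemma norm_cexp_neg_I_mul_ofReal (r : ℝ) : ‖cexp (-I * r)‖ = 1 := by
  simp [Complex.norm_exp]

section ExpSeries

variable {ι V : Type*} [NormedAddCommGroup V] [InnerProductSpace ℝ V]

noncomputable def expSeries (c : ι → ℂ) (x : ι → V) (ξ : V) : ℂ :=
  ∑' k, c k * cexp (-I * ⟪x k, ξ⟫)

variable {c : ι → ℂ} {x : ι → V}

lemma norm_expSeries_le (hc : Summable (‖c ·‖)) (ξ : V) :
    ‖expSeries c x ξ‖ ≤ ∑' k, ‖c k‖ :=
  tsum_of_norm_bounded hc.hasSum fun k => by rw [norm_mul, norm_cexp_neg_I_mul_ofReal, mul_one]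

lemma continuous_expSeries (hc : Summable (‖c ·‖)) : Continuous (expSeries c x) :=
  continuous_tsum (fun k => by fun_prop) hc fun k ξ => by
    rw [norm_mul, norm_cexp_neg_I_mul_ofReal, mul_one]

variable [MeasurableSpace V] [OpensMeasurableSpace V] {μ : Measure V}

lemma integrable_cexp_neg_I_inner_mul {g : V → ℂ} (hg : Integrable g μ) (y : V) :
    Integrable (fun ξ => cexp (-I * ⟪y, ξ⟫) * g ξ) μ :=
  hg.bdd_mul (by fun_prop) (.of_forall fun ξ => (norm_cexp_neg_I_mul_ofReal _).le)

lemma integral_expSeries_mul [Countable ι] (hc : Summable (‖c ·‖)) {g : V → ℂ}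
    (hg : Integrable g μ) :
    ∫ ξ, expSeries c x ξ * g ξ ∂μ = ∑' k, c k * ∫ ξ, cexp (-I * ⟪x k, ξ⟫) * g ξ ∂μ := by
  have hint k : Integrable (fun ξ => c k * (cexp (-I * ⟪x k, ξ⟫) * g ξ)) μ :=
    (integrable_cexp_neg_I_inner_mul hg (x k)).const_mul (c k)
  have hnorm k : ∫ ξ, ‖c k * (cexp (-I * ⟪x k, ξ⟫) * g ξ)‖ ∂μ = ‖c k‖ * ∫ ξ, ‖g ξ‖ ∂μ := by
    simp_rw [norm_mul, norm_cexp_neg_I_mul_ofReal, one_mul, integral_const_mul]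
  simp_rw [← integral_const_mul]
  rw [integral_tsum_of_summable_integral_norm hint (by simpa only [hnorm] using hc.mul_right _)]
  simp_rw [expSeries, ← tsum_mul_right, mul_assoc]

end ExpSeries

section FiniteDimensional

variable {V : Type*} [NormedAddCommGroup V] [InnerProductSpace ℝ V] [FiniteDimensional ℝ V]
  [MeasurableSpace V] [BorelSpace V] {ι : Type*} [Countable ι] {c : ι → ℂ} {x : ι → V}

theorem MeasureTheory.Integrable.ae_eq_zero_of_fourier_eq_zero {F : V → ℂ} (hF : Integrable F)
    (h : 𝓕 F = 0) : F =ᵐ[volume] 0 := by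
  refine ae_eq_zero_of_integral_contDiff_smul_eq_zero hF.locallyIntegrable fun g hg hgc => ?_
  -- Every test function `g` is the Fourier transform of a Schwartz function `ψ`,
  -- and `𝓕` is self-adjoint.
  let ψ : 𝓢(V, ℂ) := 𝓕⁻ ((hgc.comp_left ofReal_zero).toSchwartzMap (ofRealCLM.contDiff.comp hg))
  have hψ : 𝓕 (ψ : V → ℂ) = fun v => (g v : ℂ) := by
    rw [← SchwartzMap.fourier_coe, FourierInvPair.fourier_fourierInv_eq]; rfl
  calc ∫ v, g v • F v = ∫ v, 𝓕 (ψ : V → ℂ) v • F v := by simp [hψ, Complex.real_smul]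
    _ = ∫ v, ψ v • 𝓕 F v := by
      have := VectorFourier.integral_fourierIntegral_smul_eq_flip
        (L := innerₗ V) continuous_fourierChar continuous_inner (ψ.integrable (μ := volume)) hF
      rwa [flip_innerₗ] at this
    _ = 0 := by simp [h]

noncomputable def gaussianWindow (s : ℝ) (z ξ : V) : ℂ :=
  cexp (-(1 / (4 * s)) * ‖ξ‖ ^ 2 + I * ⟪z, ξ⟫)

lemma one_div_four_mul_re_pos {s : ℝ} (hs : 0 < s) : 0 < (1 / (4 * (s : ℂ))).re := by
  simp; positivity

lemma integrable_gaussianWindow {s : ℝ} (hs : 0 < s) (z : V) :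
    Integrable (gaussianWindow s z) :=
  integrable_cexp_neg_mul_sq_norm_add (one_div_four_mul_re_pos hs) I z

lemma integral_cexp_neg_I_inner_mul_gaussianWindow {s : ℝ} (hs : 0 < s) (y z : V) :
    ∫ ξ, cexp (-I * ⟪y, ξ⟫) * gaussianWindow s z ξ =
      (4 * π * s) ^ (Module.finrank ℝ V / 2 : ℂ) * rexp (-s * ‖y - z‖ ^ 2) := by
  convert integral_cexp_neg_mul_sq_norm_add (one_div_four_mul_re_pos hs) (-I) (y - z) using 2
  · ext ξ
    rw [gaussianWindow, ← Complex.exp_add, inner_sub_left]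
    push_cast
    ring_nf
  · field_simp
  · rw [ofReal_exp, neg_sq, I_sq]
    push_cast
    field_simp

lemma eq_zero_of_expSeries_ae_eq_zero (hx : Function.Injective x) (hc : Summable (‖c ·‖))
    (h : expSeries c x =ᵐ[volume] 0) (j : ι) : c j = 0 := by
  have hmean : ∀ s > 0, ∑' k, c k * rexp (-s * ‖x k - x j‖ ^ 2) = (0 : ℂ) := by
    intro s hs
    have hzero : ∫ ξ, expSeries c x ξ * gaussianWindow s (x j) ξ = 0 :=
      integral_eq_zero_of_ae (by filter_upwards [h] with ξ hξ; simp [hξ])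
    rw [integral_expSeries_mul hc (integrable_gaussianWindow hs (x j))] at hzero
    simp_rw [integral_cexp_neg_I_inner_mul_gaussianWindow hs, mul_left_comm (c _),
      tsum_mul_left] at hzero
    refine (mul_eq_zero.mp hzero).resolve_left (cpow_ne_zero_iff.mpr (.inl ?_))
    exact_mod_cast (by positivity : 4 * π * s ≠ 0)
  exact tendsto_nhds_unique (tendsto_tsum_mul_exp_neg_mul_norm_sub_sq hx hc j)
    (tendsto_const_nhds.congr' (eventually_gt_atTop 0 |>.mono fun s hs => (hmean s hs).symm))

noncomputable def translationKernel (φ : V → ℂ) (s t : V) : ℂ :=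
  ∫ ξ, cexp (-I * ⟪s - t, ξ⟫) * φ ξ

lemma fourier_expSeries_mul {φ : V → ℂ} (hφ : Integrable φ) (hc : Summable (‖c ·‖)) (w : V) :
    𝓕 (fun ξ => expSeries c x ξ * φ ξ) w =
      ∑' k, c k * translationKernel φ (x k) (-((2 * π) • w)) := by
  have hchar ξ : cexp (↑(-2 * π * ⟪ξ, w⟫) * I) • (expSeries c x ξ * φ ξ) =
      expSeries c x ξ * (cexp (-I * ⟪(2 * π) • w, ξ⟫) * φ ξ) := by
    rw [real_inner_smul_left, real_inner_comm, smul_eq_mul]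
    push_cast
    ring_nf
  simp_rw [fourier_eq', hchar, integral_expSeries_mul hc (integrable_cexp_neg_I_inner_mul hφ _),
    translationKernel, ← mul_assoc, ← Complex.exp_add, sub_neg_eq_add, inner_add_left]
  push_cast
  ring_nf

theorem eq_zero_of_tsum_mul_translationKernel_eq_zero {φ : V → ℂ} (hφ : Integrable φ)
    (hne : ∀ᵐ ξ, φ ξ ≠ 0) (hx : Function.Injective x) (hc : Summable (‖c ·‖))
    (h : ∀ t, ∑' k, c k * translationKernel φ (x k) t = 0) (j : ι) : c j = 0 := by
  have hint : Integrable (fun ξ => expSeries c x ξ * φ ξ) :=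
    hφ.bdd_mul (continuous_expSeries hc).aestronglyMeasurable (.of_forall (norm_expSeries_le hc))
  have hfourier : 𝓕 (fun ξ => expSeries c x ξ * φ ξ) = 0 :=
    funext fun w => (fourier_expSeries_mul hφ hc w).trans (h _)
  refine eq_zero_of_expSeries_ae_eq_zero hx hc ?_ j
  filter_upwards [hint.ae_eq_zero_of_fourier_eq_zero hfourier, hne] with ξ hξ hφξ
  exact (mul_eq_zero.mp hξ).resolve_right hφξ

end FiniteDimensional

theorem stmt_2_general (d : ℕ) (φ : (Fin d → ℝ) → ℂ)
    (hφ : Integrable φ)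
    (hne : ∀ᵐ ξ : Fin d → ℝ, φ ξ ≠ 0) :
    ∀ x : ℕ → (Fin d → ℝ), Function.Injective x → ∀ c : ℕ → ℂ,
      Summable (fun j => ‖c j‖) →
      (∀ t : Fin d → ℝ,
        ∑' j, c j * ∫ ξ : Fin d → ℝ,
          Complex.exp (-Complex.I * ((∑ i, (x j i - t i) * ξ i : ℝ) : ℂ)) * φ ξ = 0) →
      ∀ j, c j = 0 := by
  intro x hx c hc h
  have hvol := PiLp.volume_preserving_ofLp (Fin d)
  have hkernel (a t : Fin d → ℝ) :
      translationKernel (φ ∘ WithLp.ofLp) (WithLp.toLp 2 a) (WithLp.toLp 2 t) =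
        ∫ ξ, cexp (-I * ((∑ i, (a i - t i) * ξ i : ℝ) : ℂ)) * φ ξ := by
    rw [translationKernel,
      ← hvol.integral_comp (MeasurableEquiv.toLp 2 _).symm.measurableEmbedding]
    simp [PiLp.inner_apply, mul_comm]
  refine eq_zero_of_tsum_mul_translationKernel_eq_zero (hvol.integrable_comp_of_integrable hφ)
    (hvol.quasiMeasurePreserving.ae hne) ((WithLp.toLp_injective 2).comp hx) hc fun t => ?_
  simpa only [Function.comp_apply, hkernel] using h (WithLp.ofLp t)

theorem stmt_2 (d : ℕ) (hd : 1 ≤ d) (φ : (Fin d → ℝ) → ℂ)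
    (hφ : Integrable φ)
    (hne : ∀ᵐ ξ : Fin d → ℝ, φ ξ ≠ 0) :
    ∀ x : ℕ → (Fin d → ℝ), Function.Injective x → ∀ c : ℕ → ℂ,
      Summable (fun j => ‖c j‖) →
      (∀ t : Fin d → ℝ,
        ∑' j, c j * ∫ ξ : Fin d → ℝ,
          Complex.exp (-Complex.I * ((∑ i, (x j i - t i) * ξ i : ℝ) : ℂ)) * φ ξ = 0) →
      ∀ j, c j = 0 :=
  stmt_2_general d φ hφ hne
end

section
/- Let X be a set, K : X × X → ℂ, and let x₁, …, x_{n+1} ∈ X be pairwise distinct points such that both the kernel matrix K[x] at x₁, …, xₙ and the kernel matrix at x₁, …, x_{n+1} are nonsingular. Then the following are equivalent: (i) ‖K[x]^{-1} K_x(x_{n+1})‖₁ ≤ 1; (ii) for every y ∈ ℂⁿ and every c ∈ ℂ^{n+1} satisfying ∑_{j=1}^{n+1} c_j K(x_j, x_i) = y_i for all i ∈ {1, …, n}, one has ‖c‖₁ ≥ ‖K[x]^{-1} y‖₁. -/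
/-
Write `c = (c', cₙ₊₁)` and `A = K[x]`, `v = K_x(xₙ₊₁)` for the first `n` nodes. The interpolation
conditions say `A c' + cₙ₊₁ v = y`, i.e. `A⁻¹ y = c' + cₙ₊₁ A⁻¹ v`, so by the triangle inequality
`‖A⁻¹ y‖₁ ≤ ‖c'‖₁ + |cₙ₊₁| ‖A⁻¹ v‖₁`, which is at most `‖c‖₁` when `‖A⁻¹ v‖₁ ≤ 1`. Conversely,
`c = eₙ₊₁` interpolates `y = v` with `‖c‖₁ = 1`.
-/

open Matrix

/-- The kernel matrix `K[x]`, with `(j,k)` entry `K(x_k, x_j)`. -/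
noncomputable def kernelMatrix {X : Type*} (K : X → X → ℂ) {n : ℕ} (x : Fin n → X) :
    Matrix (Fin n) (Fin n) ℂ := Matrix.of fun j k => K (x k) (x j)

/-- The vector `K_x(t)`, with `j`-th entry `K(t, x_j)`. -/
noncomputable def kernelVec {X : Type*} (K : X → X → ℂ) {n : ℕ} (x : Fin n → X) (t : X) :
    Fin n → ℂ := fun j => K t (x j)

/-- The `ℓ¹` norm of a vector in `ℂⁿ`. -/
noncomputable def l1norm {n : ℕ} (v : Fin n → ℂ) : ℝ := ∑ j, ‖v j‖

theorem l1norm_add_le {n : ℕ} (u v : Fin n → ℂ) : l1norm (u + v) ≤ l1norm u + l1norm v := by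
  rw [l1norm, l1norm, l1norm, ← Finset.sum_add_distrib]
  exact Finset.sum_le_sum fun j _ => norm_add_le (u j) (v j)

theorem l1norm_smul {n : ℕ} (a : ℂ) (v : Fin n → ℂ) : l1norm (a • v) = ‖a‖ * l1norm v := by
  simp only [l1norm, Pi.smul_apply, smul_eq_mul, norm_mul, Finset.mul_sum]

theorem Matrix.inv_mulVec_mulVec_add {ι R : Type*} [Fintype ι] [DecidableEq ι] [CommRing R]
    {A : Matrix ι ι R} (hA : IsUnit A.det) (u w : ι → R) :
    A⁻¹ *ᵥ (A *ᵥ u + w) = u + A⁻¹ *ᵥ w := by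
  rw [mulVec_add, mulVec_mulVec, nonsing_inv_mul A hA, one_mulVec]

theorem sum_mul_kernel_castSucc_eq {X : Type*} (K : X → X → ℂ) {n : ℕ} (x : Fin (n + 1) → X)
    (c : Fin (n + 1) → ℂ) (i : Fin n) :
    ∑ j, c j * K (x j) (x i.castSucc) =
      (kernelMatrix K (fun i : Fin n => x i.castSucc) *ᵥ (fun j : Fin n => c j.castSucc) +
        c (Fin.last n) • kernelVec K (fun i : Fin n => x i.castSucc) (x (Fin.last n))) i := by
  simp [Fin.sum_univ_castSucc, kernelMatrix, kernelVec, mulVec, dotProduct, mul_comm]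

theorem stmt_5_general {X : Type*} (K : X → X → ℂ) (n : ℕ) (x : Fin (n + 1) → X)
    (hA : IsUnit (kernelMatrix K (fun i : Fin n => x i.castSucc)).det) :
    (l1norm ((kernelMatrix K (fun i : Fin n => x i.castSucc))⁻¹ *ᵥ
        kernelVec K (fun i : Fin n => x i.castSucc) (x (Fin.last n))) ≤ 1)
      ↔
    (∀ (y : Fin n → ℂ) (c : Fin (n + 1) → ℂ),
      (∀ i : Fin n, ∑ j, c j * K (x j) (x i.castSucc) = y i) →
      l1norm ((kernelMatrix K (fun i : Fin n => x i.castSucc))⁻¹ *ᵥ y) ≤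
        ∑ j, ‖c j‖) := by
  set A := kernelMatrix K (fun i : Fin n => x i.castSucc)
  set v := kernelVec K (fun i : Fin n => x i.castSucc) (x (Fin.last n))
  constructor
  · intro hv y c hc
    obtain rfl : y = A *ᵥ (fun j : Fin n => c j.castSucc) + c (Fin.last n) • v :=
      funext fun i => (hc i).symm.trans (sum_mul_kernel_castSucc_eq K x c i)
    rw [inv_mulVec_mulVec_add hA, mulVec_smul, Fin.sum_univ_castSucc]
    calc _ ≤ l1norm (fun j : Fin n => c j.castSucc) + ‖c (Fin.last n)‖ * l1norm (A⁻¹ *ᵥ v) := by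
          rw [← l1norm_smul]; exact l1norm_add_le _ _
      _ ≤ l1norm (fun j : Fin n => c j.castSucc) + ‖c (Fin.last n)‖ := by
          gcongr
          exact mul_le_of_le_one_right (norm_nonneg _) hv
  · intro h
    simpa [Fin.sum_univ_castSucc] using h v (Pi.single (Fin.last n) 1) fun i => by
      simp [sum_mul_kernel_castSucc_eq, v, ← Pi.zero_def]

theorem stmt_5 {X : Type*} (K : X → X → ℂ) (n : ℕ) (x : Fin (n + 1) → X)
    (hx : Function.Injective x)
    (hA : IsUnit (kernelMatrix K (fun i : Fin n => x i.castSucc)).det)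
    (hA' : IsUnit (kernelMatrix K x).det) :
    (l1norm ((kernelMatrix K (fun i : Fin n => x i.castSucc))⁻¹ *ᵥ
        kernelVec K (fun i : Fin n => x i.castSucc) (x (Fin.last n))) ≤ 1)
      ↔
    (∀ (y : Fin n → ℂ) (c : Fin (n + 1) → ℂ),
      (∀ i : Fin n, ∑ j, c j * K (x j) (x i.castSucc) = y i) →
      l1norm ((kernelMatrix K (fun i : Fin n => x i.castSucc))⁻¹ *ᵥ y) ≤
        ∑ j, ‖c j‖) :=
  stmt_5_general K n x hA
end

section
/- Let X be a set and K : X × X → ℂ a bounded function satisfying condition (A1). Assume that for every n, all pairwise distinct x₁, …, xₙ ∈ X, every y ∈ ℂⁿ, and every c ∈ ℓ¹(X) with Φ(c)(x_i) = y_i for all i, one has ‖c‖_{ℓ¹(X)} ≥ ‖(K[x])^{-1} y‖₁. Then for every n, all pairwise distinct x₁, …, xₙ ∈ X, every continuous V : ℂⁿ → [0,∞), every continuous nondecreasing φ : [0,∞) → [0,∞) with lim_{t→∞} φ(t) = ∞, and every μ > 0, there exists c₀ ∈ ℓ¹(X) with support contained in {x₁, …, xₙ} such that V(Φ(c₀)(x₁),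 …, Φ(c₀)(xₙ)) + μ φ(‖c₀‖_{ℓ¹(X)}) ≤ V(Φ(c)(x₁), …, Φ(c)(xₙ)) + μ φ(‖c‖_{ℓ¹(X)}) for every c ∈ ℓ¹(X). -/
/-!
The regularized functional only sees `c` through the data `y = (Φ(c)(x_i))_i` and the norm
`‖c‖₁`. For fixed data the minimal-norm hypothesis says `‖c‖₁ ≥ ‖K[x]⁻¹ y‖₁`, and the
coefficients `K[x]⁻¹ y` are realized by the kernel expansion `∑ a_i K(x_i, ·)`, so since `φ` is
nondecreasing it suffices to minimize `a ↦ V(K[x] a) + μ φ(‖a‖₁)` over `ℂⁿ`. This function is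
continuous and tends to `∞` at infinity because `φ` does, hence it attains its minimum.
-/

open Matrix Filter Topology

/-- Condition (A1): every kernel matrix at finitely many pairwise distinct points is
nonsingular. -/
def CondA1 {X : Type*} (K : X → X → ℂ) : Prop :=
  ∀ (n : ℕ) (x : Fin n → X), Function.Injective x → IsUnit (kernelMatrix K x).det

/-- `Φ(c)(x) = ∑_{t ∈ X} c_t K(t, x)` for `c ∈ ℓ¹(X)`. -/
noncomputable def PhiMap {X : Type*} (K : X → X → ℂ) (c : X → ℂ) (x : X) : ℂ :=
  ∑' t, c t * K t x

theorem exists_forall_le_add_mul_comp {E : Type*} [TopologicalSpace E] [Nonempty E]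
    {V N : E → ℝ} (hV : Continuous V) (hV0 : ∀ a, 0 ≤ V a) (hN : Continuous N)
    (hN0 : ∀ a, 0 ≤ N a) (hNtop : Tendsto N (cocompact E) atTop)
    {φ : ℝ → ℝ} (hφ : ContinuousOn φ (Set.Ici 0)) (hφtop : Tendsto φ atTop atTop)
    {μ : ℝ} (hμ : 0 < μ) :
    ∃ a, ∀ b, V a + μ * φ (N a) ≤ V b + μ * φ (N b) := by
  refine (hV.add (continuous_const.mul (hφ.comp_continuous hN hN0))).exists_forall_le ?_
  exact tendsto_atTop_mono (fun a => le_add_of_nonneg_left (hV0 a))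
    ((hφtop.comp hNtop).const_mul_atTop hμ)

section l1norm

variable {n : ℕ}

theorem l1norm_nonneg (v : Fin n → ℂ) : 0 ≤ l1norm v :=
  Finset.sum_nonneg fun j _ => norm_nonneg (v j)

theorem continuous_l1norm : Continuous (l1norm (n := n)) :=
  continuous_finsetSum _ fun j _ => (continuous_apply j).norm

theorem norm_le_l1norm (v : Fin n → ℂ) : ‖v‖ ≤ l1norm v :=
  (pi_norm_le_iff_of_nonneg (l1norm_nonneg v)).2 fun i =>
    Finset.single_le_sum (fun j _ => norm_nonneg (v j)) (Finset.mem_univ i)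

theorem tendsto_l1norm_cocompact : Tendsto (l1norm (n := n)) (cocompact _) atTop :=
  tendsto_atTop_mono norm_le_l1norm tendsto_norm_cocompact_atTop

end l1norm

section kernelExpansion

variable {X : Type*} {n : ℕ} {x : Fin n → X}

theorem Function.Injective.apply_extend_zero {ι γ δ : Type*} [Zero γ] [Zero δ] {f : ι → X}
    (hf : Function.Injective f) (F : X → γ → δ) (hF : ∀ t, F t 0 = 0) (a : ι → γ) (t : X) :
    F t (Function.extend f a 0 t) = Function.extend f (fun i => F (f i) (a i)) 0 t := by
  by_cases ht : ∃ i, f i = t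
  · obtain ⟨i, rfl⟩ := ht
    simp only [hf.extend_apply]
  · simp only [Function.extend_apply' _ _ _ ht, Pi.zero_apply, hF]

theorem summable_norm_extend {ι E : Type*} [Finite ι] [NormedAddCommGroup E] {f : ι → X}
    (hf : Function.Injective f) (a : ι → E) :
    Summable fun t => ‖Function.extend f a 0 t‖ := by
  simp_rw [hf.apply_extend_zero (fun _ => norm) (fun _ => norm_zero)]
  exact (summable_extend_zero hf).2 .of_finite

theorem tsum_norm_extend (hx : Function.Injective x) (a : Fin n → ℂ) :
    ∑' t, ‖Function.extend x a 0 t‖ = l1norm a := by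
  simp_rw [hx.apply_extend_zero (fun _ => norm) (fun _ => norm_zero)]
  exact (tsum_extend_zero hx _).trans (tsum_fintype _)

theorem PhiMap_extend (K : X → X → ℂ) (hx : Function.Injective x) (a : Fin n → ℂ) (z : X) :
    PhiMap K (Function.extend x a 0) z = ∑ i, a i * K (x i) z := by
  unfold PhiMap
  simp_rw [hx.apply_extend_zero (fun t w => w * K t z) (fun _ => zero_mul _)]
  exact (tsum_extend_zero hx _).trans (tsum_fintype _)

theorem PhiMap_extend_eq_mulVec (K : X → X → ℂ) (hx : Function.Injective x) (a : Fin n → ℂ) :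
    (fun j => PhiMap K (Function.extend x a 0) (x j)) = kernelMatrix K x *ᵥ a := by
  funext j
  simp only [PhiMap_extend K hx, mulVec, dotProduct, kernelMatrix, of_apply, mul_comm]

end kernelExpansion

theorem stmt_7_general {X : Type*} (K : X → X → ℂ) (hA1 : CondA1 K)
    (hmni : ∀ (n : ℕ) (x : Fin n → X), Function.Injective x → ∀ y : Fin n → ℂ,
      ∀ c : X → ℂ, Summable (fun t => ‖c t‖) →
        (∀ i, PhiMap K c (x i) = y i) →
        l1norm ((kernelMatrix K x)⁻¹ *ᵥ y) ≤ ∑' t, ‖c t‖) :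
    ∀ (n : ℕ) (x : Fin n → X), Function.Injective x →
      ∀ V : (Fin n → ℂ) → ℝ, Continuous V → (∀ v, 0 ≤ V v) →
      ∀ φ : ℝ → ℝ, ContinuousOn φ (Set.Ici 0) → MonotoneOn φ (Set.Ici 0) →
        (∀ t ∈ Set.Ici (0 : ℝ), 0 ≤ φ t) → Tendsto φ atTop atTop →
      ∀ μ : ℝ, 0 < μ →
      ∃ c₀ : X → ℂ, Summable (fun t => ‖c₀ t‖) ∧
        (∀ t, c₀ t ≠ 0 → ∃ i, t = x i) ∧
        ∀ c : X → ℂ, Summable (fun t => ‖c t‖) →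
          V (fun i => PhiMap K c₀ (x i)) + μ * φ (∑' t, ‖c₀ t‖) ≤
            V (fun i => PhiMap K c (x i)) + μ * φ (∑' t, ‖c t‖) := by
  intro n x hx V hV hV0 φ hφ hφmono _ hφtop μ hμ
  set A := kernelMatrix K x
  obtain ⟨a₀, ha₀⟩ := exists_forall_le_add_mul_comp
    (hV.comp (continuous_const.matrix_mulVec continuous_id)) (fun a => hV0 (A *ᵥ a))
    continuous_l1norm l1norm_nonneg tendsto_l1norm_cocompact hφ hφtop hμ
  refine ⟨Function.extend x a₀ 0, summable_norm_extend hx a₀, fun t ht => ?_, fun c hc => ?_⟩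
  · obtain ⟨i, -, hi⟩ := Function.support_extend_zero_subset ht
    exact ⟨i, hi.symm⟩
  set y := fun i => PhiMap K c (x i)
  have hAy : A *ᵥ (A⁻¹ *ᵥ y) = y := by
    rw [mulVec_mulVec, mul_nonsing_inv _ (hA1 n x hx), one_mulVec]
  have hnorm : l1norm (A⁻¹ *ᵥ y) ≤ ∑' t, ‖c t‖ := hmni n x hx y c hc fun _ => rfl
  rw [PhiMap_extend_eq_mulVec K hx, tsum_norm_extend hx]
  calc _ ≤ V (A *ᵥ (A⁻¹ *ᵥ y)) + μ * φ (l1norm (A⁻¹ *ᵥ y)) := ha₀ _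
    _ ≤ V y + μ * φ (∑' t, ‖c t‖) := by
      rw [hAy]
      gcongr
      exact hφmono (l1norm_nonneg _) ((l1norm_nonneg _).trans hnorm) hnorm

theorem stmt_7 {X : Type*} (K : X → X → ℂ) (M : ℝ)
    (hK : ∀ s t, ‖K s t‖ ≤ M) (hA1 : CondA1 K)
    (hmni : ∀ (n : ℕ) (x : Fin n → X), Function.Injective x → ∀ y : Fin n → ℂ,
      ∀ c : X → ℂ, Summable (fun t => ‖c t‖) →
        (∀ i, PhiMap K c (x i) = y i) →
        l1norm ((kernelMatrix K x)⁻¹ *ᵥ y) ≤ ∑' t, ‖c t‖) :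
    ∀ (n : ℕ) (x : Fin n → X), Function.Injective x →
      ∀ V : (Fin n → ℂ) → ℝ, Continuous V → (∀ v, 0 ≤ V v) →
      ∀ φ : ℝ → ℝ, ContinuousOn φ (Set.Ici 0) → MonotoneOn φ (Set.Ici 0) →
        (∀ t ∈ Set.Ici (0 : ℝ), 0 ≤ φ t) → Tendsto φ atTop atTop →
      ∀ μ : ℝ, 0 < μ →
      ∃ c₀ : X → ℂ, Summable (fun t => ‖c₀ t‖) ∧
        (∀ t, c₀ t ≠ 0 → ∃ i, t = x i) ∧
        ∀ c : X → ℂ, Summable (fun t => ‖c t‖) →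
          V (fun i => PhiMap K c₀ (x i)) + μ * φ (∑' t, ‖c₀ t‖) ≤
            V (fun i => PhiMap K c (x i)) + μ * φ (∑' t, ‖c t‖) :=
  stmt_7_general K hA1 hmni
end

section
/- Let X be a set, K : X × X → ℂ a bounded function, and x₁, …, xₙ ∈ X pairwise distinct points such that the kernel matrix K[x] is nonsingular, and assume ‖(K[x])^{-1} K_x(t)‖₁ ≤ 1 for every t ∈ X. Given y ∈ ℂⁿ, define f₀ : X → ℂ by f₀(t) := ∑_{k=1}^n (yᵀ(K[x])^{-1})_k K(t, x_k). Then f₀(x_i) = y_i for all i ∈ {1, …, n}, sup_{t∈X} |f₀(t)| = max_{1≤i≤n} |y_i|, and sup_{t∈X} |f₀(t)| ≤ sup_{t∈X} |g(t)| for every function g : X → ℂ with g(x_i) = y_i for all i; that is, f₀ is a supremum-norm minimal interpolant of the data. -/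
open Matrix
open scoped ENNReal NNReal

/-!
The interpolant is `f₀(t) = y ⬝ᵥ c(t)` with `c(t) = K[x]⁻¹ K_x(t)`. At a node `x_i` the vector
`K_x(x_i)` is the `i`-th column of `K[x]`, so `c(x_i) = eᵢ` and `f₀` interpolates. Everywhere else
Hölder's inequality with `‖c(t)‖₁ ≤ 1` gives `|f₀(t)| ≤ maxᵢ |yᵢ|`; conversely any interpolant,
`f₀` included, has sup norm at least `maxᵢ |yᵢ|`.
-/

section SupNorm

variable {X ι E : Type*} [SeminormedAddGroup E]

theorem iSup_nnnorm_values_le_iSup_nnnorm {g : X → E} {x : ι → X} {y : ι → E}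
    (hg : ∀ i, g (x i) = y i) :
    (⨆ i, (‖y i‖₊ : ℝ≥0∞)) ≤ ⨆ t, (‖g t‖₊ : ℝ≥0∞) := by
  simpa only [hg] using iSup_comp_le (fun t => (‖g t‖₊ : ℝ≥0∞)) x

theorem iSup_nnnorm_eq_iSup_nnnorm_values {f : X → E} {x : ι → X} {y : ι → E}
    (hf : ∀ i, f (x i) = y i) (hbound : ∀ t, (‖f t‖₊ : ℝ≥0∞) ≤ ⨆ i, (‖y i‖₊ : ℝ≥0∞)) :
    (⨆ t, (‖f t‖₊ : ℝ≥0∞)) = ⨆ i, (‖y i‖₊ : ℝ≥0∞) :=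
  le_antisymm (iSup_le hbound) (iSup_nnnorm_values_le_iSup_nnnorm hf)

end SupNorm

theorem nnnorm_dotProduct_le_iSup_mul_sum {ι 𝕜 : Type*} [Fintype ι] [NormedRing 𝕜]
    (v w : ι → 𝕜) :
    (‖v ⬝ᵥ w‖₊ : ℝ≥0∞) ≤ (⨆ i, (‖v i‖₊ : ℝ≥0∞)) * ∑ j, (‖w j‖₊ : ℝ≥0∞) :=
  calc (‖v ⬝ᵥ w‖₊ : ℝ≥0∞) ≤ ∑ j, (‖v j‖₊ : ℝ≥0∞) * ‖w j‖₊ := by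
        rw [dotProduct]
        exact_mod_cast (nnnorm_sum_le _ _).trans
          (Finset.sum_le_sum fun j _ => nnnorm_mul_le (v j) (w j))
    _ ≤ ∑ j, (⨆ i, (‖v i‖₊ : ℝ≥0∞)) * ‖w j‖₊ :=
        Finset.sum_le_sum fun j _ => mul_le_mul_left (le_iSup (fun i => (‖v i‖₊ : ℝ≥0∞)) j) _
    _ = (⨆ i, (‖v i‖₊ : ℝ≥0∞)) * ∑ j, (‖w j‖₊ : ℝ≥0∞) := (Finset.mul_sum ..).symm

theorem sum_nnnorm_eq_ofReal_l1norm {n : ℕ} (v : Fin n → ℂ) :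
    ∑ j, (‖v j‖₊ : ℝ≥0∞) = ENNReal.ofReal (l1norm v) := by
  rw [l1norm, ENNReal.ofReal_sum_of_nonneg fun j _ => norm_nonneg (v j)]
  simp only [ofReal_norm, enorm_eq_nnnorm]

section KernelInterpolation

variable {X : Type*} (K : X → X → ℂ) {n : ℕ} (x : Fin n → X)

noncomputable def kernelInterpolant (y : Fin n → ℂ) (t : X) : ℂ :=
  ∑ k, (y ᵥ* (kernelMatrix K x)⁻¹) k * K t (x k)

theorem kernelInterpolant_eq_dotProduct (y : Fin n → ℂ) (t : X) :
    kernelInterpolant K x y t = y ⬝ᵥ ((kernelMatrix K x)⁻¹ *ᵥ kernelVec K x t) := by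
  rw [dotProduct_mulVec]
  rfl

theorem kernelInterpolant_apply_node (hdet : IsUnit (kernelMatrix K x).det) (y : Fin n → ℂ)
    (i : Fin n) : kernelInterpolant K x y (x i) = y i := by
  change ((y ᵥ* (kernelMatrix K x)⁻¹) ᵥ* kernelMatrix K x) i = y i
  rw [vecMul_vecMul, nonsing_inv_mul _ hdet, vecMul_one]

theorem nnnorm_kernelInterpolant_le (y : Fin n → ℂ) (t : X)
    (ht : l1norm ((kernelMatrix K x)⁻¹ *ᵥ kernelVec K x t) ≤ 1) :
    (‖kernelInterpolant K x y t‖₊ : ℝ≥0∞) ≤ ⨆ i, (‖y i‖₊ : ℝ≥0∞) := by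
  have hc : ∑ j, (‖((kernelMatrix K x)⁻¹ *ᵥ kernelVec K x t) j‖₊ : ℝ≥0∞) ≤ 1 := by
    rwa [sum_nnnorm_eq_ofReal_l1norm, ENNReal.ofReal_le_one]
  rw [kernelInterpolant_eq_dotProduct]
  calc _ ≤ _ := nnnorm_dotProduct_le_iSup_mul_sum _ _
    _ ≤ (⨆ i, (‖y i‖₊ : ℝ≥0∞)) * 1 := mul_le_mul_right hc _
    _ = _ := mul_one _

end KernelInterpolation

theorem stmt_11_general {X : Type*} (K : X → X → ℂ)
    (n : ℕ) (x : Fin n → X)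
    (hdet : IsUnit (kernelMatrix K x).det)
    (hA4 : ∀ t : X, l1norm ((kernelMatrix K x)⁻¹ *ᵥ kernelVec K x t) ≤ 1)
    (y : Fin n → ℂ) :
    (∀ i, (∑ k, (y ᵥ* (kernelMatrix K x)⁻¹) k * K (x i) (x k)) = y i) ∧
    (⨆ t : X, (‖∑ k, (y ᵥ* (kernelMatrix K x)⁻¹) k * K t (x k)‖₊ : ℝ≥0∞)) =
      (⨆ i : Fin n, (‖y i‖₊ : ℝ≥0∞)) ∧
    ∀ g : X → ℂ, (∀ i, g (x i) = y i) →
      (⨆ t : X, (‖∑ k, (y ᵥ* (kernelMatrix K x)⁻¹) k * K t (x k)‖₊ : ℝ≥0∞)) ≤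
        ⨆ t : X, (‖g t‖₊ : ℝ≥0∞) := by
  have hinterp : ∀ i, kernelInterpolant K x y (x i) = y i :=
    kernelInterpolant_apply_node K x hdet y
  have hsup : (⨆ t, (‖kernelInterpolant K x y t‖₊ : ℝ≥0∞)) = ⨆ i, (‖y i‖₊ : ℝ≥0∞) :=
    iSup_nnnorm_eq_iSup_nnnorm_values hinterp
      fun t => nnnorm_kernelInterpolant_le K x y t (hA4 t)
  exact ⟨hinterp, hsup, fun g hg => hsup.trans_le (iSup_nnnorm_values_le_iSup_nnnorm hg)⟩

theorem stmt_11 {X : Type*} (K : X → X → ℂ) (M : ℝ)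
    (hK : ∀ s t, ‖K s t‖ ≤ M)
    (n : ℕ) (x : Fin n → X) (hx : Function.Injective x)
    (hdet : IsUnit (kernelMatrix K x).det)
    (hA4 : ∀ t : X, l1norm ((kernelMatrix K x)⁻¹ *ᵥ kernelVec K x t) ≤ 1)
    (y : Fin n → ℂ) :
    (∀ i, (∑ k, (y ᵥ* (kernelMatrix K x)⁻¹) k * K (x i) (x k)) = y i) ∧
    (⨆ t : X, (‖∑ k, (y ᵥ* (kernelMatrix K x)⁻¹) k * K t (x k)‖₊ : ℝ≥0∞)) =
      (⨆ i : Fin n, (‖y i‖₊ : ℝ≥0∞)) ∧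
    ∀ g : X → ℂ, (∀ i, g (x i) = y i) →
      (⨆ t : X, (‖∑ k, (y ᵥ* (kernelMatrix K x)⁻¹) k * K t (x k)‖₊ : ℝ≥0∞)) ≤
        ⨆ t : X, (‖g t‖₊ : ℝ≥0∞) :=
  stmt_11_general K n x hdet hA4 y
end

section
/- Let X be a finite set and K : X × X → ℂ satisfy condition (A1). Suppose that for every n, all pairwise distinct x₁, …, xₙ ∈ X, and every y ∈ ℂⁿ, there exists a ∈ ℂⁿ such that the function g(t) := ∑_{j=1}^n a_j K(t, x_j) satisfies g(x_i) = y_i for all i ∈ {1, …, n} and max_{t∈X} |g(t)| ≤ max_{t∈X} |h(t)| for every function h : X → ℂ with h(x_i) = y_i for all i. Then K satisfies condition (A4): for all pairwise distinct x₁, …, x_{n+1} ∈ X, ‖(K[x])^{-1} K_x(x_{n+1})‖₁ ≤ 1. -/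
open Matrix

/-
Put `v = K[x]⁻¹ K_x(t)` with `t = x_{n+1}`, and interpolate the data `y_j = conj v_j / |v_j|`,
which satisfy `|y_j| ≤ 1` and `y ⬝ v = ‖v‖₁`. The minimal interpolant `g = ∑ a_j K(·, x_j)`
solves `K[x]ᵀ a = y`, so `g(t) = a ⬝ K_x(t) = y ⬝ K[x]⁻¹ K_x(t) = ‖v‖₁`. Its sup norm is at most
that of any other extension of `y`, e.g. the one vanishing off the nodes, hence `‖v‖₁ ≤ 1`.
-/

lemma exists_dotProduct_eq_l1norm {n : ℕ} (v : Fin n → ℂ) :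
    ∃ y : Fin n → ℂ, (∀ i, ‖y i‖ ≤ 1) ∧ y ⬝ᵥ v = l1norm v := by
  -- at `v i = 0` this `y i` is the junk value `0 / 0 = 0`, which still works
  refine ⟨fun i => starRingEnd ℂ (v i) / ‖v i‖, fun i => ?_, ?_⟩
  · rw [norm_div, Complex.norm_conj, Complex.norm_real, norm_norm]
    exact div_self_le_one _
  · simp only [dotProduct, l1norm]
    push_cast
    refine Finset.sum_congr rfl fun i _ => ?_
    rw [div_mul_eq_mul_div, Complex.conj_mul', sq, mul_self_div_self]

lemma exists_extend_of_norm_le {ι X E : Type*} [SeminormedAddCommGroup E] {x : ι → X}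
    (hx : Function.Injective x) {y : ι → E} {c : ℝ} (hc : 0 ≤ c) (hy : ∀ i, ‖y i‖ ≤ c) :
    ∃ h : X → E, (∀ i, h (x i) = y i) ∧ ∀ t, ‖h t‖ ≤ c := by
  refine ⟨Function.extend x y 0, hx.extend_apply y 0, fun t => ?_⟩
  by_cases ht : ∃ i, x i = t
  · obtain ⟨i, rfl⟩ := ht
    rw [hx.extend_apply]
    exact hy i
  · rw [Function.extend_apply' _ _ _ ht, Pi.zero_apply, norm_zero]
    exact hc

lemma Matrix.dotProduct_eq_transpose_mulVec_dotProduct_inv_mulVec {n R : Type*} [Fintype n]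
    [DecidableEq n] [CommRing R] {N : Matrix n n R} (hN : IsUnit N.det) (a w : n → R) :
    a ⬝ᵥ w = (Nᵀ *ᵥ a) ⬝ᵥ (N⁻¹ *ᵥ w) := by
  rw [mulVec_transpose, ← dotProduct_mulVec, mulVec_mulVec, mul_nonsing_inv _ hN, one_mulVec]

lemma kernelMatrix_transpose_mulVec {X : Type*} (K : X → X → ℂ) {n : ℕ} (x : Fin n → X)
    (a : Fin n → ℂ) : (kernelMatrix K x)ᵀ *ᵥ a = fun i => ∑ j, a j * K (x i) (x j) := by
  ext i
  simp only [mulVec, dotProduct, transpose_apply, kernelMatrix, of_apply, mul_comm]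

theorem stmt_12 {X : Type*} [Fintype X] (K : X → X → ℂ) (hA1 : CondA1 K)
    (hext : ∀ (n : ℕ) (x : Fin n → X), Function.Injective x → ∀ y : Fin n → ℂ,
      ∃ a : Fin n → ℂ, (∀ i, (∑ j, a j * K (x i) (x j)) = y i) ∧
        ∀ h : X → ℂ, (∀ i, h (x i) = y i) →
          (⨆ t : X, ‖∑ j, a j * K t (x j)‖) ≤ ⨆ t : X, ‖h t‖) :
    ∀ (n : ℕ) (x : Fin (n + 1) → X), Function.Injective x →
      l1norm ((kernelMatrix K (fun i : Fin n => x i.castSucc))⁻¹ *ᵥ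
        kernelVec K (fun i : Fin n => x i.castSucc) (x (Fin.last n))) ≤ 1 := by
  intro n x hx
  set x' : Fin n → X := fun i => x i.castSucc
  have hx' : Function.Injective x' := hx.comp (Fin.castSucc_injective n)
  set t := x (Fin.last n)
  set v := (kernelMatrix K x')⁻¹ *ᵥ kernelVec K x' t
  obtain ⟨y, hy, hyv⟩ := exists_dotProduct_eq_l1norm v
  obtain ⟨a, hinterp, hmin⟩ := hext n x' hx' y
  obtain ⟨h, hhx, hh⟩ := exists_extend_of_norm_le hx' zero_le_one hy
  have hgt : ∑ j, a j * K t (x' j) = l1norm v := by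
    have hay : (kernelMatrix K x')ᵀ *ᵥ a = y := by
      rw [kernelMatrix_transpose_mulVec]
      exact funext hinterp
    rw [← hyv, ← hay]
    exact dotProduct_eq_transpose_mulVec_dotProduct_inv_mulVec (hA1 n x' hx') a _
  have hv : 0 ≤ l1norm v := Finset.sum_nonneg fun i _ => norm_nonneg _
  calc l1norm v = ‖∑ j, a j * K t (x' j)‖ := by
        rw [hgt, Complex.norm_real, Real.norm_of_nonneg hv]
    _ ≤ ⨆ s, ‖∑ j, a j * K s (x' j)‖ :=
        le_ciSup (Finite.bddAbove_range fun s => ‖∑ j, a j * K s (x' j)‖) t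
    _ ≤ ⨆ s, ‖h s‖ := hmin h hhx
    _ ≤ 1 := Real.iSup_le hh zero_le_one
end

section
/- Let K(s,t) := min(s,t) − st for s, t ∈ (0,1) (the Brownian bridge kernel). For every n ≥ 1, all pairwise distinct x₁, …, xₙ ∈ (0,1), and every t ∈ (0,1), one has ‖(K[x])^{-1} K_x(t)‖₁ ≤ 1; that is, K satisfies condition (A4). -/
open Matrix

/-- The kernel matrix of the Brownian bridge kernel `K(s,t) = min(s,t) - st`. -/
noncomputable def bbMatrix {n : ℕ} (x : Fin n → ℝ) : Matrix (Fin n) (Fin n) ℝ :=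
  Matrix.of fun j k => min (x k) (x j) - x k * x j

/-- The vector `K_x(t)` for the Brownian bridge kernel. -/
noncomputable def bbVec {n : ℕ} (x : Fin n → ℝ) (t : ℝ) : Fin n → ℝ :=
  fun j => min t (x j) - t * x j

/-!
For each node `s`, the function `u ↦ K(u, s) = min u s - u s` is affine on both sides of `s` and
vanishes at `u = 0` and `u = 1`. Hence, if `a ≤ t < b` are consecutive points of
`{0, x₁, …, xₙ, 1}`, then `K_x(t)` is the convex combination
`((b - t) K_x(a) + (t - a) K_x(b)) / (b - a)`. Since `K_x(x_k)` is the `k`-th column of `K[x]` and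
`K_x(0) = K_x(1) = 0`, this writes `K_x(t) = K[x] c` with `‖c‖₁ ≤ 1`, and then
`(K[x])⁻¹ K_x(t) = c` (or `0`, the junk value of `⁻¹` at a singular matrix).
-/

theorem Matrix.sum_abs_nonsing_inv_mulVec_mulVec_le {ι K : Type*} [Fintype ι] [DecidableEq ι]
    [Field K] [LinearOrder K] [IsStrictOrderedRing K] (A : Matrix ι ι K) (c : ι → K) :
    ∑ j, |(A⁻¹ *ᵥ (A *ᵥ c)) j| ≤ ∑ j, |c j| := by
  by_cases hA : IsUnit A.det
  · rw [mulVec_mulVec, nonsing_inv_mul A hA, one_mulVec]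
  · simpa [nonsing_inv_apply_not_isUnit A hA] using Finset.sum_nonneg fun j _ => abs_nonneg (c j)

theorem Finset.exists_consecutive_le_lt {α : Type*} [LinearOrder α] (s : Finset α) {t : α}
    (hlo : ∃ a ∈ s, a ≤ t) (hhi : ∃ b ∈ s, t < b) :
    ∃ a ∈ s, ∃ b ∈ s, a ≤ t ∧ t < b ∧ ∀ c ∈ s, c ∉ Set.Ioo a b := by
  have hlo' : (s.filter (· ≤ t)).Nonempty := by simpa [Finset.Nonempty] using hlo
  have hhi' : (s.filter (t < ·)).Nonempty := by simpa [Finset.Nonempty] using hhi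
  have ha := Finset.mem_filter.1 ((s.filter (· ≤ t)).max'_mem hlo')
  have hb := Finset.mem_filter.1 ((s.filter (t < ·)).min'_mem hhi')
  refine ⟨_, ha.1, _, hb.1, ha.2, hb.2, fun c hc ⟨hac, hcb⟩ => ?_⟩
  rcases le_or_gt c t with hct | htc
  · exact hac.not_ge (Finset.le_max' _ c (Finset.mem_filter.2 ⟨hc, hct⟩))
  · exact hcb.not_ge (Finset.min'_le _ c (Finset.mem_filter.2 ⟨hc, htc⟩))

theorem min_sub_mul_eq_of_notMem_Ioo {a b t s : ℝ} (hab : a < b) (ht : t ∈ Set.Icc a b)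
    (hs : s ∉ Set.Ioo a b) :
    min t s - t * s =
      (b - t) / (b - a) * (min a s - a * s) + (t - a) / (b - a) * (min b s - b * s) := by
  have hba : b - a ≠ 0 := sub_ne_zero.2 hab.ne'
  rw [Set.mem_Ioo, not_and_or, not_lt, not_lt] at hs
  rcases hs with hsa | hbs
  · rw [min_eq_right (hsa.trans ht.1), min_eq_right hsa, min_eq_right (hsa.trans hab.le)]
    field_simp
    ring
  · rw [min_eq_left (ht.2.trans hbs), min_eq_left (hab.le.trans hbs), min_eq_left hbs]
    field_simp
    ring

section BrownianBridge

variable {n : ℕ} (x : Fin n → ℝ)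

theorem bbMatrix_mulVec_single_one (k : Fin n) : bbMatrix x *ᵥ Pi.single k 1 = bbVec x (x k) := by
  ext j
  simp [mulVec_single, bbMatrix, bbVec]

theorem bbVec_zero (hx : ∀ j, 0 ≤ x j) : bbVec x 0 = 0 := by
  ext j
  rw [bbVec, min_eq_left (hx j), zero_mul, sub_self, Pi.zero_apply]

theorem bbVec_one (hx : ∀ j, x j ≤ 1) : bbVec x 1 = 0 := by
  ext j
  rw [bbVec, min_eq_right (hx j), one_mul, sub_self, Pi.zero_apply]

theorem bbVec_eq_of_notMem_Ioo {a b t : ℝ} (hab : a < b) (ht : t ∈ Set.Icc a b)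
    (hx : ∀ j, x j ∉ Set.Ioo a b) :
    bbVec x t = ((b - t) / (b - a)) • bbVec x a + ((t - a) / (b - a)) • bbVec x b := by
  ext j
  exact min_sub_mul_eq_of_notMem_Ioo hab ht (hx j)

def BBRepresentable (t : ℝ) : Prop :=
  ∃ c : Fin n → ℝ, ∑ j, |c j| ≤ 1 ∧ bbMatrix x *ᵥ c = bbVec x t

theorem bbRepresentable_zero (hx : ∀ j, 0 ≤ x j) : BBRepresentable x 0 :=
  ⟨0, by simp, by rw [mulVec_zero, bbVec_zero x hx]⟩

theorem bbRepresentable_one (hx : ∀ j, x j ≤ 1) : BBRepresentable x 1 :=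
  ⟨0, by simp, by rw [mulVec_zero, bbVec_one x hx]⟩

theorem bbRepresentable_node (k : Fin n) : BBRepresentable x (x k) :=
  ⟨Pi.single k 1, by simp [Pi.single_apply, apply_ite], bbMatrix_mulVec_single_one x k⟩

theorem BBRepresentable.of_notMem_Ioo {a b t : ℝ} (ha : BBRepresentable x a)
    (hb : BBRepresentable x b) (hab : a < b) (ht : t ∈ Set.Icc a b)
    (hx : ∀ j, x j ∉ Set.Ioo a b) : BBRepresentable x t := by
  obtain ⟨ca, hca, hKa⟩ := ha
  obtain ⟨cb, hcb, hKb⟩ := hb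
  set μ := (b - t) / (b - a)
  set ν := (t - a) / (b - a)
  have hμ : 0 ≤ μ := div_nonneg (by linarith [ht.2]) (by linarith)
  have hν : 0 ≤ ν := div_nonneg (by linarith [ht.1]) (by linarith)
  have hμν : μ + ν = 1 := by
    rw [← add_div, div_eq_one_iff_eq (by linarith)]
    ring
  refine ⟨μ • ca + ν • cb, ?_, ?_⟩
  · calc ∑ j, |(μ • ca + ν • cb) j| ≤ ∑ j, (μ * |ca j| + ν * |cb j|) := by
          refine Finset.sum_le_sum fun j _ => ?_
          simpa [abs_mul, abs_of_nonneg hμ, abs_of_nonneg hν] using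
            abs_add_le (μ * ca j) (ν * cb j)
      _ = μ * ∑ j, |ca j| + ν * ∑ j, |cb j| := by
          rw [Finset.sum_add_distrib, Finset.mul_sum, Finset.mul_sum]
      _ ≤ μ * 1 + ν * 1 := by gcongr
      _ = 1 := by rw [mul_one, mul_one, hμν]
  · rw [mulVec_add, mulVec_smul, mulVec_smul, hKa, hKb, bbVec_eq_of_notMem_Ioo x hab ht hx]

end BrownianBridge

theorem stmt_14_general (n : ℕ) (x : Fin n → ℝ) (hx : ∀ i, x i ∈ Set.Ioo (0 : ℝ) 1)
    (t : ℝ) (ht : t ∈ Set.Ioo (0 : ℝ) 1) :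
    ∑ j, |((bbMatrix x)⁻¹ *ᵥ bbVec x t) j| ≤ 1 := by
  set s : Finset ℝ := insert 0 (insert 1 (Finset.univ.image x))
  have hs : ∀ r ∈ s, BBRepresentable x r := by
    intro r hr
    rcases Finset.mem_insert.1 hr with rfl | hr
    · exact bbRepresentable_zero x fun j => (hx j).1.le
    rcases Finset.mem_insert.1 hr with rfl | hr
    · exact bbRepresentable_one x fun j => (hx j).2.le
    obtain ⟨k, -, rfl⟩ := Finset.mem_image.1 hr
    exact bbRepresentable_node x k
  obtain ⟨a, ha, b, hb, hat, htb, hgap⟩ := s.exists_consecutive_le_lt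
    ⟨0, by simp [s], ht.1.le⟩ ⟨1, by simp [s], ht.2⟩
  obtain ⟨c, hc, hKc⟩ := (hs a ha).of_notMem_Ioo x (hs b hb) (hat.trans_lt htb)
    ⟨hat, htb.le⟩ fun j => hgap (x j) (by simp [s])
  rw [← hKc]
  exact (Matrix.sum_abs_nonsing_inv_mulVec_mulVec_le _ c).trans hc

theorem stmt_14 (n : ℕ) (hn : 1 ≤ n) (x : Fin n → ℝ)
    (hx : ∀ i, x i ∈ Set.Ioo (0 : ℝ) 1) (hinj : Function.Injective x)
    (t : ℝ) (ht : t ∈ Set.Ioo (0 : ℝ) 1) :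
    ∑ j, |((bbMatrix x)⁻¹ *ᵥ bbVec x t) j| ≤ 1 :=
  stmt_14_general n x hx t ht
end

section
/- Let K(s,t) := min(s,t) − st for s, t ∈ (0,1) (the Brownian bridge kernel). For every injective sequence (x_j)_{j∈ℕ} in (0,1) and every complex sequence (c_j) with ∑_j |c_j| < ∞, if ∑_{j=1}^∞ c_j (min(x_j, t) − x_j t) = 0 for all t ∈ (0,1), then c_j = 0 for all j; that is, K satisfies condition (A3). -/
/-!
The second difference of `t ↦ min a t - a * t` with step `h` at `t₀` is minus the hat function
`max 0 (h - |a - t₀|)`: the linear part cancels, and `min a ·` has a single kink, at `a`.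
Taking this second difference of the vanishing series at `t₀ = x j` and dividing by `h` gives
`∑ c k * max 0 (1 - |x k - x j| / h) = 0` for all small `h > 0`. As `h → 0⁺` these normalized
hats are bounded by `1` and tend to the indicator of `x j`, so by dominated convergence for series
(Tannery's theorem) and injectivity of `x` the sums tend to `c j`, which therefore vanishes.
-/

open Filter Topology

def brownianBridgeKernel (s t : ℝ) : ℝ := min s t - s * t

lemma min_add_min_sub_two_mul_min {h : ℝ} (hh : 0 ≤ h) (a t : ℝ) :
    min a (t + h) + min a (t - h) - 2 * min a t = -max 0 (h - |a - t|) := by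
  rcases le_total a t with hat | hta
  · rw [abs_of_nonpos (sub_nonpos.mpr hat), min_eq_left (by linarith), min_eq_left hat]
    rcases le_total a (t - h) with h1 | h1
    · rw [min_eq_left h1, max_eq_left (by linarith)]; ring
    · rw [min_eq_right h1, max_eq_right (by linarith)]; ring
  · rw [abs_of_nonneg (sub_nonneg.mpr hta), min_eq_right (by linarith : t - h ≤ a),
      min_eq_right hta]
    rcases le_total a (t + h) with h1 | h1
    · rw [min_eq_left h1, max_eq_right (by linarith)]; ring
    · rw [min_eq_right h1, max_eq_left (by linarith)]; ring

lemma brownianBridgeKernel_second_difference {h : ℝ} (hh : 0 ≤ h) (a t : ℝ) :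
    brownianBridgeKernel a (t + h) + brownianBridgeKernel a (t - h)
      - 2 * brownianBridgeKernel a t = -max 0 (h - |a - t|) := by
  unfold brownianBridgeKernel
  linear_combination min_add_min_sub_two_mul_min hh a t

lemma abs_brownianBridgeKernel_le_one {s t : ℝ} (hs : s ∈ Set.Icc 0 1) (ht : t ∈ Set.Icc 0 1) :
    |brownianBridgeKernel s t| ≤ 1 := by
  have hst : s * t ≤ min s t :=
    le_min (mul_le_of_le_one_right hs.1 ht.2) (mul_le_of_le_one_left ht.1 hs.2)
  unfold brownianBridgeKernel
  rw [abs_le]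
  constructor
  · linarith
  · linarith [min_le_left s t, mul_nonneg hs.1 ht.1, hs.2]

section

variable {β 𝕜 : Type*} [RCLike 𝕜] {c : β → 𝕜} {x : β → ℝ}

lemma summable_mul_brownianBridgeKernel (hc : Summable fun k => ‖c k‖)
    (hx : ∀ k, x k ∈ Set.Icc 0 1) {t : ℝ} (ht : t ∈ Set.Icc 0 1) :
    Summable fun k => c k * (brownianBridgeKernel (x k) t : 𝕜) :=
  hc.of_norm_bounded fun k => by
    rw [norm_mul, RCLike.norm_ofReal]
    exact mul_le_of_le_one_right (norm_nonneg _) (abs_brownianBridgeKernel_le_one (hx k) ht)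

lemma tsum_mul_max_sub_abs_eq_zero (hc : Summable fun k => ‖c k‖)
    (hx : ∀ k, x k ∈ Set.Icc 0 1)
    (hzero : ∀ t ∈ Set.Ioo (0 : ℝ) 1, ∑' k, c k * (brownianBridgeKernel (x k) t : 𝕜) = 0)
    {t h : ℝ} (hh : 0 ≤ h) (hlo : 0 < t - h) (hhi : t + h < 1) :
    ∑' k, c k * ((max 0 (h - |x k - t|) : ℝ) : 𝕜) = 0 := by
  have ht : t ∈ Set.Ioo (0 : ℝ) 1 := ⟨by linarith, by linarith⟩
  have hplus : t + h ∈ Set.Ioo (0 : ℝ) 1 := ⟨by linarith, hhi⟩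
  have hminus : t - h ∈ Set.Ioo (0 : ℝ) 1 := ⟨hlo, by linarith⟩
  have hsum := fun s (hs : s ∈ Set.Ioo (0 : ℝ) 1) =>
    summable_mul_brownianBridgeKernel (𝕜 := 𝕜) hc hx (Set.Ioo_subset_Icc_self hs)
  calc ∑' k, c k * ((max 0 (h - |x k - t|) : ℝ) : 𝕜)
      = ∑' k, (2 * (c k * (brownianBridgeKernel (x k) t : 𝕜))
          - (c k * (brownianBridgeKernel (x k) (t + h) : 𝕜)
            + c k * (brownianBridgeKernel (x k) (t - h) : 𝕜))) := by
        refine tsum_congr fun k => ?_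
        rw [← neg_neg (max _ _), ← brownianBridgeKernel_second_difference hh]
        push_cast
        ring
    _ = 0 := by
        rw [Summable.tsum_sub ((hsum t ht).mul_left 2) ((hsum _ hplus).add (hsum _ hminus)),
          Summable.tsum_add (hsum _ hplus) (hsum _ hminus), tsum_mul_left,
          hzero t ht, hzero _ hplus, hzero _ hminus]
        ring

lemma eventually_max_sub_abs_div_eq (d : ℝ) :
    ∀ᶠ h in 𝓝[>] (0 : ℝ), max 0 (h - |d|) / h = if d = 0 then 1 else 0 := by
  by_cases hd : d = 0
  · filter_upwards [self_mem_nhdsWithin] with h (hpos : 0 < h)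
    simp [hd, hpos.le, hpos.ne']
  · filter_upwards [Ioo_mem_nhdsGT (abs_pos.mpr hd)] with h hh
    simp [hd, hh.2.le]

lemma abs_max_sub_abs_div_le_one {h : ℝ} (hh : 0 < h) (d : ℝ) :
    |max 0 (h - |d|) / h| ≤ 1 := by
  rw [abs_of_nonneg (by positivity), div_le_one hh]
  exact max_le hh.le (by linarith [abs_nonneg d])

theorem eq_zero_of_tsum_mul_max_sub_abs_eq_zero (hinj : Function.Injective x)
    (hc : Summable fun k => ‖c k‖) (j : β)
    (hzero : ∀ᶠ h in 𝓝[>] (0 : ℝ), ∑' k, c k * ((max 0 (h - |x k - x j|) : ℝ) : 𝕜) = 0) :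
    c j = 0 := by
  classical
  set f : ℝ → β → 𝕜 := fun h k => c k * ((max 0 (h - |x k - x j|) / h : ℝ) : 𝕜)
  have hlim : Tendsto (fun h => ∑' k, f h k) (𝓝[>] 0)
      (𝓝 (∑' k, if k = j then c j else 0)) := by
    refine tendsto_tsum_of_dominated_convergence hc (fun k => tendsto_const_nhds.congr' ?_) ?_
    · filter_upwards [eventually_max_sub_abs_div_eq (x k - x j)] with h hh
      simp only [f, hh, sub_eq_zero, hinj.eq_iff]
      split_ifs with hk
      · simp [hk]
      · simp
    · filter_upwards [self_mem_nhdsWithin] with h (hpos : 0 < h) k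
      rw [norm_mul, RCLike.norm_ofReal]
      exact mul_le_of_le_one_right (norm_nonneg _) (abs_max_sub_abs_div_le_one hpos _)
  have hvanish : ∀ᶠ h in 𝓝[>] 0, ∑' k, f h k = 0 := by
    filter_upwards [hzero] with h hh
    simp only [f, RCLike.ofReal_div, ← mul_div_assoc]
    rw [tsum_div_const, hh, zero_div]
  rw [tsum_ite_eq] at hlim
  exact tendsto_nhds_unique hlim (tendsto_const_nhds.congr' (hvanish.mono fun _ h => h.symm))

end

theorem stmt_15 (x : ℕ → ℝ) (hx : ∀ j, x j ∈ Set.Ioo (0 : ℝ) 1)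
    (hinj : Function.Injective x) (c : ℕ → ℂ)
    (hc : Summable fun j => ‖c j‖)
    (hzero : ∀ t ∈ Set.Ioo (0 : ℝ) 1,
      ∑' j, c j * ((min (x j) t - x j * t : ℝ) : ℂ) = 0) :
    ∀ j, c j = 0 := by
  intro j
  refine eq_zero_of_tsum_mul_max_sub_abs_eq_zero hinj hc j ?_
  have hδ : 0 < min (x j) (1 - x j) := lt_min (hx j).1 (by linarith [(hx j).2])
  filter_upwards [Ioo_mem_nhdsGT hδ] with h hh
  exact tsum_mul_max_sub_abs_eq_zero hc (fun k => Set.Ioo_subset_Icc_self (hx k)) hzero hh.1.le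
    (by linarith [hh.2, min_le_left (x j) (1 - x j)])
    (by linarith [hh.2, min_le_right (x j) (1 - x j)])
end

section
/- For every n ≥ 1 and all pairwise distinct real numbers x₁, …, xₙ, the n × n matrix with (j,k) entry e^{−|x_j − x_k|} is nonsingular. In other words, the exponential kernel K(s,t) := e^{−|s−t|} on ℝ × ℝ satisfies condition (A1). -/
open Finset

private lemma expker_det_ne_zero_of_strictMono {n : ℕ} (x : Fin n → ℝ)
    (hx : StrictMono x) :
    (Matrix.of fun j k : Fin n => Real.exp (-|x j - x k|)).det ≠ 0 := by
  classical
  set y : ℕ → ℝ := fun i => if h : i < n then x ⟨i, h⟩ else 0 with hy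
  set F : ℕ → ℝ := fun k => if k = 0 then 0 else Real.exp (2 * y (k - 1)) with hF
  have hF0 : F 0 = 0 := by simp [hF]
  have hFsucc : ∀ p : Fin n, F (p + 1) = Real.exp (2 * x p) := by
    intro p
    simp only [hF, Nat.add_eq_zero, and_false, if_false, Nat.add_sub_cancel, hy, p.isLt,
      dif_pos]
    norm_num
  have hgsq_pos : ∀ m : Fin n, 0 < F (m + 1) - F m := by
    intro m
    rw [hFsucc m]
    rcases Nat.eq_zero_or_pos m.val with h0 | hpos
    · simp [hF, h0, Real.exp_pos]
    · have hm1 : (m : ℕ) - 1 < n := lt_of_le_of_lt (Nat.sub_le _ _) m.isLt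
      have : F m = Real.exp (2 * x ⟨(m : ℕ) - 1, hm1⟩) := by
        simp only [hF, Nat.pos_iff_ne_zero.mp hpos, if_false, hy, hm1, dif_pos]
      rw [this, sub_pos, Real.exp_lt_exp]
      have : (⟨(m : ℕ) - 1, hm1⟩ : Fin n) < m := by
        simp [Fin.lt_def, Nat.sub_lt hpos Nat.one_pos]
      nlinarith [hx this]
  set L : Matrix (Fin n) (Fin n) ℝ :=
    Matrix.of (fun k m : Fin n =>
      if m ≤ k then Real.exp (-(x k)) * Real.sqrt (F (m + 1) - F m) else 0) with hL
  have hLtri : L.BlockTriangular OrderDual.toDual := by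
    intro i j hij
    have : ¬ j ≤ i := not_le.mpr hij
    simp [hL, this]
  have hfact : (Matrix.of fun j k : Fin n => Real.exp (-|x j - x k|)) = L * L.transpose := by
    ext j k
    simp only [Matrix.mul_apply, Matrix.transpose_apply, hL, Matrix.of_apply]
    have hterm : ∀ m : Fin n,
        (if m ≤ j then Real.exp (-(x j)) * Real.sqrt (F (m + 1) - F m) else 0) *
        (if m ≤ k then Real.exp (-(x k)) * Real.sqrt (F (m + 1) - F m) else 0)
        = Real.exp (-(x j)) * Real.exp (-(x k)) *
            (if (m : ℕ) ≤ ((j ⊓ k : Fin n) : ℕ) then F (m + 1) - F m else 0) := by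
      intro m
      by_cases hmj : m ≤ j <;> by_cases hmk : m ≤ k
      · rw [if_pos hmj, if_pos hmk, if_pos (by exact_mod_cast (le_min hmj hmk : m ≤ j ⊓ k))]
        have h := Real.mul_self_sqrt (hgsq_pos m).le
        linear_combination Real.exp (-(x j)) * Real.exp (-(x k)) * h
      · rw [if_pos hmj, if_neg hmk,
          if_neg (by exact_mod_cast fun h => hmk (le_trans (by exact_mod_cast h) (min_le_right j k)))]
        ring
      · rw [if_neg hmj, if_pos hmk,
          if_neg (by exact_mod_cast fun h => hmj (le_trans (by exact_mod_cast h) (min_le_left j k)))]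
        ring
      · rw [if_neg hmj, if_neg hmk,
          if_neg (by exact_mod_cast fun h => hmj (le_trans (by exact_mod_cast h) (min_le_left j k)))]
        ring
    rw [Finset.sum_congr rfl fun m _ => hterm m, ← Finset.mul_sum]
    set p : Fin n := j ⊓ k with hp
    have h1 : (∑ m : Fin n, if (m : ℕ) ≤ (p : ℕ) then (F (m + 1) - F m) else 0)
        = ∑ i ∈ Finset.range ((p : ℕ) + 1), (F (i + 1) - F i) := by
      rw [Fin.sum_univ_eq_sum_range (fun i : ℕ => if i ≤ (p : ℕ) then (F (i + 1) - F i) else 0)]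
      rw [← Finset.sum_subset (Finset.range_subset_range.mpr (p.isLt : (p : ℕ) + 1 ≤ n))]
      · exact Finset.sum_congr rfl fun i hi => if_pos (by
          have := Finset.mem_range.mp hi; omega)
      · intro i _ hi
        exact if_neg (by have : ¬ i < (p : ℕ) + 1 := fun h => hi (Finset.mem_range.mpr h); omega)
    rw [h1, Finset.sum_range_sub F, hF0, sub_zero, hFsucc p]
    rw [← Real.exp_add, ← Real.exp_add]
    congr 1
    have hmin : x p = min (x j) (x k) := hx.monotone.map_min
    rcases le_total (x j) (x k) with h | h
    · rw [abs_of_nonpos (by linarith), hmin, min_eq_left h]; ring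
    · rw [abs_of_nonneg (by linarith), hmin, min_eq_right h]; ring
  have hdiag : ∀ i : Fin n, 0 < L i i := by
    intro i
    have : (0:ℝ) < Real.sqrt (F (i + 1) - F i) := Real.sqrt_pos.mpr (hgsq_pos i)
    simp only [hL, Matrix.of_apply, le_refl, if_pos]
    positivity
  have hdetL : 0 < L.det := by
    rw [Matrix.det_of_lowerTriangular L hLtri]
    exact Finset.prod_pos fun i _ => hdiag i
  rw [hfact, Matrix.det_mul, Matrix.det_transpose]
  positivity

theorem stmt_16 (n : ℕ) (hn : 1 ≤ n) (x : Fin n → ℝ)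
    (hinj : Function.Injective x) :
    (Matrix.of fun j k : Fin n => Real.exp (-|x j - x k|)).det ≠ 0 := by
  classical
  set σ := Tuple.sort x with hσ
  have hmono : Monotone (x ∘ σ) := Tuple.monotone_sort x
  have hsm : StrictMono (x ∘ σ) :=
    hmono.strictMono_of_injective (hinj.comp σ.injective)
  have key := expker_det_ne_zero_of_strictMono (x ∘ σ) hsm
  rw [← Matrix.det_submatrix_equiv_self σ
    (Matrix.of fun j k : Fin n => Real.exp (-|x j - x k|))]
  exact key
end

section
/- Let K(s,t) := e^{−|s−t|} for s, t ∈ ℝ (the exponential kernel). For every n ≥ 1, all pairwise distinct x₁, …, xₙ ∈ ℝ, and every t ∈ ℝ, one has ‖(K[x])^{-1} K_x(t)‖₁ ≤ 1; that is, K satisfies condition (A4). -/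
/-!
The exponential kernel is Markovian: if `p` lies between `s` and `t` then
`e^{-|t-s|} = e^{-|p-s|} e^{-|t-p|}`, and if `p ≤ t ≤ q` and `s ∉ (p, q)` then
`sinh (q-p) e^{-|t-s|} = sinh (q-t) e^{-|p-s|} + sinh (t-p) e^{-|q-s|}`.
Hence on the nodes `K(·, t)` is a combination of the kernel columns of the one or two nodes
nearest to `t`, with nonnegative weights of total mass at most `1` (by superadditivity of `sinh`
on `[0, ∞)`), and this coefficient vector is `K[x]⁻¹ K_x(t)`.
-/

open Matrix

/-- The kernel matrix of the exponential kernel `K(s,t) = e^{-|s-t|}`, with `(j,k)`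
entry `K(x_k, x_j)`. -/
noncomputable def expMatrix {n : ℕ} (x : Fin n → ℝ) : Matrix (Fin n) (Fin n) ℝ :=
  Matrix.of fun j k => Real.exp (-|x k - x j|)

/-- The vector `K_x(t)` for the exponential kernel, with `j`-th entry `K(t, x_j)`. -/
noncomputable def expVec {n : ℕ} (x : Fin n → ℝ) (t : ℝ) : Fin n → ℝ :=
  fun j => Real.exp (-|t - x j|)

open Real Finset

lemma sum_abs_inv_mulVec_le_of_mulVec_eq {ι 𝕜 : Type*} [Fintype ι] [DecidableEq ι] [Field 𝕜]
    [LinearOrder 𝕜] [IsStrictOrderedRing 𝕜] (A : Matrix ι ι 𝕜) {v c : ι → 𝕜} {r : 𝕜}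
    (hc : A *ᵥ c = v) (hcr : ∑ j, |c j| ≤ r) (hr : 0 ≤ r) :
    ∑ j, |(A⁻¹ *ᵥ v) j| ≤ r := by
  -- for singular `A` the junk value `A⁻¹ = 0` is what makes `0 ≤ r` necessary
  by_cases hA : IsUnit A.det
  · rwa [← hc, mulVec_mulVec, nonsing_inv_mul _ hA, one_mulVec]
  · simpa [nonsing_inv_apply_not_isUnit _ hA] using hr

lemma sum_abs_single {ι 𝕜 : Type*} [Fintype ι] [DecidableEq ι] [AddCommGroup 𝕜] [Lattice 𝕜]
    [IsOrderedAddMonoid 𝕜] (i : ι) (a : 𝕜) : ∑ j, |Pi.single i a j| = |a| := by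
  simp [Pi.apply_single (fun _ => abs) (fun _ => abs_zero)]

lemma sum_abs_single_add_single_le {ι 𝕜 : Type*} [Fintype ι] [DecidableEq ι] [AddCommGroup 𝕜]
    [Lattice 𝕜] [IsOrderedAddMonoid 𝕜] (i k : ι) (a b : 𝕜) :
    ∑ j, |(Pi.single i a + Pi.single k b : ι → 𝕜) j| ≤ |a| + |b| :=
  calc ∑ j, |(Pi.single i a + Pi.single k b : ι → 𝕜) j|
      ≤ ∑ j, (|Pi.single i a j| + |Pi.single k b j|) := sum_le_sum fun j _ => abs_add_le _ _
    _ = |a| + |b| := by rw [sum_add_distrib, sum_abs_single, sum_abs_single]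

lemma Real.sinh_add_sinh_le_sinh_add {u v : ℝ} (hu : 0 ≤ u) (hv : 0 ≤ v) :
    sinh u + sinh v ≤ sinh (u + v) :=
  sinh_add u v ▸ add_le_add (le_mul_of_one_le_right (sinh_nonneg_iff.2 hu) (one_le_cosh v))
    (le_mul_of_one_le_left (sinh_nonneg_iff.2 hv) (one_le_cosh u))

lemma Real.exp_neg_abs_sub_eq_mul {p s t : ℝ} (hp : p ∈ Set.uIcc s t) :
    exp (-|t - s|) = exp (-|p - s|) * exp (-|t - p|) := by
  rw [← exp_add]
  congr 1
  rcases le_total s t with h | h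
  · rw [Set.uIcc_of_le h] at hp
    rw [abs_of_nonneg (by linarith), abs_of_nonneg (by linarith [hp.1]),
      abs_of_nonneg (by linarith [hp.2])]
    ring
  · rw [Set.uIcc_of_ge h] at hp
    rw [abs_of_nonpos (by linarith), abs_of_nonpos (by linarith [hp.2]),
      abs_of_nonpos (by linarith [hp.1])]
    ring

lemma Real.sinh_mul_exp_neg_abs_sub {p q s t : ℝ} (hpt : p ≤ t) (htq : t ≤ q)
    (hs : s ≤ p ∨ q ≤ s) :
    sinh (q - p) * exp (-|t - s|) =
      sinh (q - t) * exp (-|p - s|) + sinh (t - p) * exp (-|q - s|) := by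
  rcases hs with hs | hs
  · rw [abs_of_nonneg (by linarith), abs_of_nonneg (by linarith), abs_of_nonneg (by linarith)]
    simp only [sinh_eq, neg_sub, exp_sub]
    field_simp
    ring
  · rw [abs_of_nonpos (by linarith), abs_of_nonpos (by linarith), abs_of_nonpos (by linarith)]
    simp only [sinh_eq, neg_neg, exp_sub, exp_neg]
    field_simp
    ring

lemma Real.abs_sinh_div_add_abs_sinh_div_le_one {p q t : ℝ} (hpt : p ≤ t) (htq : t ≤ q)
    (hpq : p < q) : |sinh (q - t) / sinh (q - p)| + |sinh (t - p) / sinh (q - p)| ≤ 1 := by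
  have hsinh := sinh_pos_iff.2 (sub_pos.2 hpq)
  rw [abs_of_nonneg (div_nonneg (sinh_nonneg_iff.2 (sub_nonneg.2 htq)) hsinh.le),
    abs_of_nonneg (div_nonneg (sinh_nonneg_iff.2 (sub_nonneg.2 hpt)) hsinh.le), ← add_div,
    div_le_one hsinh]
  simpa using sinh_add_sinh_le_sinh_add (sub_nonneg.2 htq) (sub_nonneg.2 hpt)

section KernelInterpolation

variable {n : ℕ}

lemma expMatrix_mulVec_single {x : Fin n → ℝ} {t : ℝ} {p : Fin n}
    (h : ∀ j, x p ∈ Set.uIcc (x j) t) :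
    expMatrix x *ᵥ Pi.single p (exp (-|t - x p|)) = expVec x t := by
  ext j
  simp [expMatrix, expVec, exp_neg_abs_sub_eq_mul (h j)]

lemma expMatrix_mulVec_single_add_single {x : Fin n → ℝ} {t : ℝ} {p q : Fin n} (hpt : x p ≤ t)
    (htq : t ≤ x q) (hpq : x p < x q) (hgap : ∀ j, x j ≤ x p ∨ x q ≤ x j) :
    expMatrix x *ᵥ (Pi.single p (sinh (x q - t) / sinh (x q - x p)) +
      Pi.single q (sinh (t - x p) / sinh (x q - x p))) = expVec x t := by
  have hsinh : sinh (x q - x p) ≠ 0 := (sinh_pos_iff.2 (sub_pos.2 hpq)).ne'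
  ext j
  have hj := sinh_mul_exp_neg_abs_sub hpt htq (hgap j)
  simp only [mulVec_add, mulVec_single, expMatrix, expVec, Pi.add_apply, Pi.smul_apply, col_apply,
    of_apply, op_smul_eq_mul]
  field_simp
  linarith

lemma exists_expMatrix_mulVec_eq_expVec (x : Fin n → ℝ) (t : ℝ) :
    ∃ c, expMatrix x *ᵥ c = expVec x t ∧ ∑ j, |c j| ≤ 1 := by
  have single_le_one (p : Fin n) : ∑ j, |Pi.single p (exp (-|t - x p|)) j| ≤ 1 := by
    rw [sum_abs_single, abs_exp, exp_le_one_iff, neg_nonpos]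
    exact abs_nonneg _
  set L := univ.filter fun j => x j ≤ t
  set R := univ.filter fun j => t < x j
  have mem_L_or_R (j : Fin n) : j ∈ L ∨ j ∈ R := by simpa [L, R] using le_or_gt (x j) t
  rcases L.eq_empty_or_nonempty with hL | hL <;> rcases R.eq_empty_or_nonempty with hR | hR
  · refine ⟨0, funext fun j => ?_, by simp⟩
    simpa [hL, hR] using mem_L_or_R j
  · obtain ⟨q, hqR, hq⟩ := R.exists_min_image x hR
    refine ⟨_, expMatrix_mulVec_single fun j => ?_, single_le_one q⟩
    have hjR : j ∈ R := by simpa [hL] using mem_L_or_R j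
    simp only [R, mem_filter, mem_univ, true_and] at hqR
    exact Set.mem_uIcc.2 (Or.inr ⟨hqR.le, hq j hjR⟩)
  · obtain ⟨p, hpL, hp⟩ := L.exists_max_image x hL
    refine ⟨_, expMatrix_mulVec_single fun j => ?_, single_le_one p⟩
    have hjL : j ∈ L := by simpa [hR] using mem_L_or_R j
    simp only [L, mem_filter, mem_univ, true_and] at hpL
    exact Set.mem_uIcc.2 (Or.inl ⟨hp j hjL, hpL⟩)
  · obtain ⟨p, hpL, hp⟩ := L.exists_max_image x hL
    obtain ⟨q, hqR, hq⟩ := R.exists_min_image x hR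
    simp only [L, R, mem_filter, mem_univ, true_and] at hpL hqR
    have hgap (j : Fin n) : x j ≤ x p ∨ x q ≤ x j := (mem_L_or_R j).imp (hp j) (hq j)
    rcases hpL.eq_or_lt with hpt | hpt
    · refine ⟨_, expMatrix_mulVec_single fun j => ?_, single_le_one p⟩
      rcases hgap j with hj | hj
      · exact Set.mem_uIcc.2 (Or.inl ⟨hj, hpL⟩)
      · exact Set.mem_uIcc.2 (Or.inr ⟨hpt.ge, by linarith⟩)
    · exact ⟨_, expMatrix_mulVec_single_add_single hpL hqR.le (hpt.trans hqR) hgap,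
        (sum_abs_single_add_single_le _ _ _ _).trans
          (abs_sinh_div_add_abs_sinh_div_le_one hpL hqR.le (hpt.trans hqR))⟩

end KernelInterpolation

theorem stmt_17_general (n : ℕ) (x : Fin n → ℝ) (t : ℝ) :
    ∑ j, |((expMatrix x)⁻¹ *ᵥ expVec x t) j| ≤ 1 := by
  obtain ⟨c, hc, hc1⟩ := exists_expMatrix_mulVec_eq_expVec x t
  exact sum_abs_inv_mulVec_le_of_mulVec_eq _ hc hc1 zero_le_one

theorem stmt_17 (n : ℕ) (hn : 1 ≤ n) (x : Fin n → ℝ)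
    (hinj : Function.Injective x) (t : ℝ) :
    ∑ j, |((expMatrix x)⁻¹ *ᵥ expVec x t) j| ≤ 1 :=
  stmt_17_general n x t
end

section
/- Let K(s,t) := e^{−|s−t|} for s, t ∈ ℝ (the exponential kernel). For every injective sequence (x_j)_{j∈ℕ} in ℝ and every complex sequence (c_j) with ∑_j |c_j| < ∞, if ∑_{j=1}^∞ c_j e^{−|x_j − t|} = 0 for all t ∈ ℝ, then c_j = 0 for all j; that is, K satisfies condition (A3). -/
/-!
Away from `s = 0` the function `e^{-|s|}` solves `f'' = f`, so its symmetric second difference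
`f (t + h) + f (t - h) - 2 cosh h f t` vanishes at every `t` with `|t| ≥ h`. Taking this second
difference of the series `∑ c_j e^{-|x_j - t|}` at `t = x_{j₀}` and dividing by `sinh h` leaves
`∑ c_j w_j(h) = 0` with weights `0 ≤ w_j(h) ≤ 1` that tend to `1` for `j = j₀` and to `0`
otherwise (injectivity of `x`), so dominated convergence as `h → 0⁺` gives `c_{j₀} = 0`.
-/


open Real Filter Topology

theorem exp_neg_abs_sub_add_exp_neg_abs_add (d : ℝ) {h : ℝ} (hh : 0 ≤ h) :
    exp (-|d - h|) + exp (-|d + h|) - 2 * cosh h * exp (-|d|) = -2 * sinh (max (h - |d|) 0) := by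
  wlog hd : 0 ≤ d generalizing d
  · have := this (-d) (by linarith)
    rwa [abs_neg, ← neg_add', abs_neg, neg_add_eq_sub, ← abs_sub_comm, add_comm (exp _)] at this
  rw [abs_of_nonneg hd, abs_of_nonneg (by linarith : 0 ≤ d + h)]
  rcases le_total h d with hhd | hdh
  · rw [abs_of_nonneg (by linarith : 0 ≤ d - h), max_eq_right (by linarith), sinh_zero, cosh_eq]
    simp only [neg_sub, neg_add, exp_sub, exp_add, exp_neg]
    field_simp
    ring
  · rw [abs_of_nonpos (by linarith : d - h ≤ 0), max_eq_left (by linarith), sinh_eq, cosh_eq]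
    simp only [neg_sub, neg_add, exp_sub, exp_add, exp_neg]
    field_simp
    ring

/-- For `0 < h`, `-1 / (2 sinh h)` times the second difference of `e^{-|·|}` at `d` with step `h`. -/
noncomputable def sinhBump (h d : ℝ) : ℝ := sinh (max (h - |d|) 0) / sinh h

theorem abs_sinhBump_le_one (h d : ℝ) : |sinhBump h d| ≤ 1 := by
  have hnum : 0 ≤ sinh (max (h - |d|) 0) := sinh_nonneg_iff.mpr (le_max_right _ _)
  rcases le_or_gt h 0 with hh | hh
  · simp [sinhBump, max_eq_right (by linarith [abs_nonneg d] : h - |d| ≤ 0)]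
  · have hden : 0 < sinh h := sinh_pos_iff.mpr hh
    rw [sinhBump, abs_of_nonneg (div_nonneg hnum hden.le), div_le_one hden, sinh_le_sinh]
    exact max_le (by linarith [abs_nonneg d]) hh.le

theorem sinhBump_eventually_eq (d : ℝ) :
    ∀ᶠ h in 𝓝[>] 0, sinhBump h d = if d = 0 then 1 else 0 := by
  split_ifs with hd
  · filter_upwards [self_mem_nhdsWithin] with h (hh : 0 < h)
    simp [sinhBump, hd, hh.le, (sinh_pos_iff.mpr hh).ne']
  · filter_upwards [nhdsWithin_le_nhds (gt_mem_nhds (abs_pos.mpr hd))] with h hh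
    simp [sinhBump, max_eq_right (by linarith : h - |d| ≤ 0)]

section

variable {ι : Type*} {c : ι → ℂ}

theorem summable_mul_ofReal_of_abs_le (hc : Summable (‖c ·‖))
    {f : ι → ℝ} {M : ℝ} (hf : ∀ j, |f j| ≤ M) : Summable fun j => c j * (f j : ℂ) :=
  .of_norm_bounded (hc.mul_right M) fun j => by
    rw [norm_mul, Complex.norm_real, Real.norm_eq_abs]
    exact mul_le_mul_of_nonneg_left (hf j) (norm_nonneg _)

theorem tendsto_tsum_mul_sinhBump (hc : Summable (‖c ·‖))
    {d : ι → ℝ} {j₀ : ι} (hd : ∀ j, d j = 0 ↔ j = j₀) :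
    Tendsto (fun h => ∑' j, c j * (sinhBump h (d j) : ℂ)) (𝓝[>] 0) (𝓝 (c j₀)) := by
  classical
  have hlim := tendsto_tsum_of_dominated_convergence (𝓕 := 𝓝[>] (0 : ℝ))
    (f := fun h j => c j * (sinhBump h (d j) : ℂ))
    (g := fun j => c j * ((if d j = 0 then 1 else 0 : ℝ) : ℂ)) hc
    (fun j => tendsto_const_nhds.congr' <| (sinhBump_eventually_eq (d j)).mono
      fun h hh => by simp only [hh])
    (.of_forall fun h j => by
      rw [norm_mul, Complex.norm_real, Real.norm_eq_abs]
      exact mul_le_of_le_one_right (norm_nonneg _) (abs_sinhBump_le_one h (d j)))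
  convert hlim using 2
  refine (tsum_ite_eq j₀ c).symm.trans (tsum_congr fun j => ?_)
  by_cases hj : j = j₀ <;> simp [hd, hj]

theorem tsum_exp_neg_abs_second_difference (hc : Summable (‖c ·‖))
    (y : ι → ℝ) (t : ℝ) {h : ℝ} (hh : 0 < h) :
    ∑' j, c j * (exp (-|y j - (t + h)|) : ℂ) + ∑' j, c j * (exp (-|y j - (t - h)|) : ℂ)
        - 2 * cosh h * ∑' j, c j * (exp (-|y j - t|) : ℂ)
      = -2 * sinh h * ∑' j, c j * (sinhBump h (y j - t) : ℂ) := by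
  have hs : ∀ s, Summable fun j => c j * (exp (-|y j - s|) : ℂ) := fun s =>
    summable_mul_ofReal_of_abs_le hc fun j => by
      rw [abs_of_pos (exp_pos _), exp_le_one_iff, neg_nonpos]
      exact abs_nonneg _
  rw [← (hs _).tsum_add (hs _), ← tsum_mul_left, ← tsum_mul_left,
    ← ((hs _).add (hs _)).tsum_sub ((hs t).mul_left _)]
  refine tsum_congr fun j => ?_
  have hpt : exp (-|y j - (t + h)|) + exp (-|y j - (t - h)|) - 2 * cosh h * exp (-|y j - t|)
      = -2 * sinh h * sinhBump h (y j - t) := by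
    rw [show y j - (t + h) = y j - t - h by ring, show y j - (t - h) = y j - t + h by ring,
      exp_neg_abs_sub_add_exp_neg_abs_add _ hh.le,
      sinhBump, mul_assoc, mul_div_cancel₀ _ (sinh_pos_iff.mpr hh).ne']
  have hptC := congrArg (fun r : ℝ => c j * r) hpt
  push_cast at hptC ⊢
  linear_combination hptC

end

theorem stmt_18 (x : ℕ → ℝ) (hinj : Function.Injective x) (c : ℕ → ℂ)
    (hc : Summable fun j => ‖c j‖)
    (hzero : ∀ t : ℝ, ∑' j, c j * ((Real.exp (-|x j - t|) : ℝ) : ℂ) = 0) :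
    ∀ j, c j = 0 := by
  intro j₀
  have hbump : ∀ h > 0, ∑' j, c j * (sinhBump h (x j - x j₀) : ℂ) = 0 := by
    intro h hh
    have hdiff : (-2 * sinh h : ℂ) * ∑' j, c j * (sinhBump h (x j - x j₀) : ℂ) = 0 := by
      rw [← tsum_exp_neg_abs_second_difference hc x (x j₀) hh, hzero, hzero, hzero]
      ring
    exact (mul_eq_zero.mp hdiff).resolve_left
      (mul_ne_zero (by norm_num) (mod_cast (sinh_pos_iff.mpr hh).ne'))
  refine tendsto_nhds_unique (tendsto_tsum_mul_sinhBump hc fun j => sub_eq_zero.trans hinj.eq_iff)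
    (tendsto_const_nhds.congr' ?_)
  filter_upwards [self_mem_nhdsWithin] with h hh using (hbump h hh).symm
end

section
/- Let X be a set, K : X × X → ℂ a bounded function satisfying condition (A1), x₁, …, xₙ ∈ X pairwise distinct points, and β ≥ 1 a real number. Then the following are equivalent: (i) ‖(K[x])^{-1} K_x(t)‖₁ ≤ β for every t ∈ X; (ii) for every y ∈ ℂⁿ and every c ∈ ℓ¹(X) with Φ(c)(x_i) = y_i for all i ∈ {1, …, n}, one has ‖c‖_{ℓ¹(X)} ≥ (1/β) ‖(K[x])^{-1} y‖₁. -/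
/-!
(i) ⇒ (ii): for bounded `K` and `c ∈ ℓ¹(X)`, the data `y = (Φ(c)(x_i))_i` is the absolutely
convergent series `∑ₜ c_t K_x(t)` in `ℂⁿ`, so `K[x]⁻¹ y = ∑ₜ c_t K[x]⁻¹ K_x(t)` has `ℓ¹` norm at most
`β ‖c‖_{ℓ¹}`. (ii) ⇒ (i): the point mass `c = δ_t` has norm `1` and interpolates `y = K_x(t)`.
-/

open Matrix

section

variable {X : Type*}

theorem l1norm_eq_norm_toLp {n : ℕ} (v : Fin n → ℂ) : l1norm v = ‖WithLp.toLp 1 v‖ := by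
  rw [PiLp.norm_eq_of_L1]; rfl

theorem norm_tsum_smul_le {𝕜 E : Type*} [NormedField 𝕜] [SeminormedAddCommGroup E]
    [NormedSpace 𝕜 E] {c : X → 𝕜} {v : X → E} {β : ℝ} (hc : Summable fun t => ‖c t‖)
    (hv : ∀ t, ‖v t‖ ≤ β) :
    ‖∑' t, c t • v t‖ ≤ (∑' t, ‖c t‖) * β :=
  tsum_of_norm_bounded (hc.hasSum.mul_right β) fun t => by
    rw [norm_smul]; exact mul_le_mul_of_nonneg_left (hv t) (norm_nonneg _)

theorem l1norm_mulVec_tsum_smul_le {m n : ℕ} (A : Matrix (Fin m) (Fin n) ℂ) {c : X → ℂ}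
    {v : X → Fin n → ℂ} {β : ℝ} (hc : Summable fun t => ‖c t‖)
    (hcv : Summable fun t => c t • v t) (hv : ∀ t, l1norm (A *ᵥ v t) ≤ β) :
    l1norm (A *ᵥ ∑' t, c t • v t) ≤ (∑' t, ‖c t‖) * β := by
  let L : (Fin n → ℂ) →L[ℂ] PiLp 1 (fun _ : Fin m => ℂ) :=
    (PiLp.continuousLinearEquiv 1 ℂ _).symm.toContinuousLinearMap.comp
      (LinearMap.toContinuousLinearMap A.mulVecLin)
  have hL : ∀ w, l1norm (A *ᵥ w) = ‖L w‖ := fun w => l1norm_eq_norm_toLp _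
  rw [hL, L.map_tsum hcv]
  simp only [map_smul]
  exact norm_tsum_smul_le hc fun t => hL (v t) ▸ hv t

theorem hasSum_norm_single {E : Type*} [SeminormedAddCommGroup E] [DecidableEq X] (t : X)
    (a : E) : HasSum (fun s => ‖(Pi.single t a : X → E) s‖) ‖a‖ := by
  simpa using hasSum_single (f := fun s => ‖(Pi.single t a : X → E) s‖) t
    fun s hs => by simp [hs]

theorem PhiMap_single [DecidableEq X] (K : X → X → ℂ) (t : X) (a : ℂ) (s : X) :
    PhiMap K (Pi.single t a) s = a * K t s := by
  rw [PhiMap, tsum_eq_single t fun r hr => by simp [hr], Pi.single_eq_same]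

variable {K : X → X → ℂ} {M : ℝ} {n : ℕ} {c : X → ℂ}

theorem summable_smul_kernelVec (hK : ∀ s t, ‖K s t‖ ≤ M) (x : Fin n → X)
    (hc : Summable fun t => ‖c t‖) : Summable fun t => c t • kernelVec K x t :=
  Summable.of_norm_bounded (hc.mul_right M) fun t => by
    rw [norm_smul]
    gcongr
    exact (pi_norm_le_iff_of_nonneg ((norm_nonneg _).trans (hK t t))).2 fun j => hK t (x j)

theorem PhiMap_comp_eq_tsum_smul_kernelVec (hK : ∀ s t, ‖K s t‖ ≤ M) (x : Fin n → X)
    (hc : Summable fun t => ‖c t‖) :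
    (fun i => PhiMap K c (x i)) = ∑' t, c t • kernelVec K x t := by
  funext i
  rw [tsum_apply (summable_smul_kernelVec hK x hc)]
  rfl

end

theorem stmt_19_general {X : Type*} (K : X → X → ℂ) (M : ℝ)
    (hK : ∀ s t, ‖K s t‖ ≤ M)
    (n : ℕ) (x : Fin n → X)
    (β : ℝ) (hβ : 1 ≤ β) :
    (∀ t : X, l1norm ((kernelMatrix K x)⁻¹ *ᵥ kernelVec K x t) ≤ β)
      ↔
    ∀ y : Fin n → ℂ, ∀ c : X → ℂ, Summable (fun t => ‖c t‖) →
      (∀ i, PhiMap K c (x i) = y i) →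
      (1 / β) * l1norm ((kernelMatrix K x)⁻¹ *ᵥ y) ≤ ∑' t, ‖c t‖ := by
  have hβ0 : 0 < β := by linarith
  constructor
  · intro h y c hc hyc
    obtain rfl : y = ∑' t, c t • kernelVec K x t := by
      rw [← PhiMap_comp_eq_tsum_smul_kernelVec hK x hc]
      exact funext fun i => (hyc i).symm
    rw [one_div, inv_mul_le_iff₀ hβ0, mul_comm]
    exact l1norm_mulVec_tsum_smul_le _ hc (summable_smul_kernelVec hK x hc) h
  · intro h t
    classical
    have hsingle := hasSum_norm_single t (1 : ℂ)
    have := h _ _ hsingle.summable fun i => (PhiMap_single K t 1 (x i)).trans (one_mul _)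
    rwa [hsingle.tsum_eq, norm_one, one_div, inv_mul_le_iff₀ hβ0, mul_one] at this

theorem stmt_19 {X : Type*} (K : X → X → ℂ) (M : ℝ)
    (hK : ∀ s t, ‖K s t‖ ≤ M) (hA1 : CondA1 K)
    (n : ℕ) (x : Fin n → X) (hx : Function.Injective x)
    (β : ℝ) (hβ : 1 ≤ β) :
    (∀ t : X, l1norm ((kernelMatrix K x)⁻¹ *ᵥ kernelVec K x t) ≤ β)
      ↔
    ∀ y : Fin n → ℂ, ∀ c : X → ℂ, Summable (fun t => ‖c t‖) →
      (∀ i, PhiMap K c (x i) = y i) →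
      (1 / β) * l1norm ((kernelMatrix K x)⁻¹ *ᵥ y) ≤ ∑' t, ‖c t‖ :=
  stmt_19_general K M hK n x β hβ
end
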